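/- arXiv:2012.01727 — 8 statements merged into one kernel-verified Lean document; each statement's English description precedes it below -/
import Mathlib

section
/- Let x, y, z : [-L, L] → [0,∞) be absolutely continuous with 0 < x + y + z < ε on [-L,L], satisfying z' ≥ z - σ(x+y), |x'| ≤ σ(x+y+z), and y' ≤ -y + σ(x+z). There is a universal σ₀ > 0 such that if 0 < σ < σ₀, then y(s) + z(s) ≤ 8σ x(s) + 4ε e^{-L/4} for all s ∈ [-L/2, L/2]. -/
/-!
Put `g = z - 2σ(x + y)`. For `σ ≤ 1/8` the three inequalities give `g' ≥ (1 - 4σ²) g`, so once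
`g` is positive it stays positive forward in time, and while it is, `z' ≥ z / 2`. Hence either
`z(s) ≤ 2σ(x + y)(s)` or `z(s) ≤ z(L) e^{-(L - s)/2} ≤ ε e^{-L/4}` for `s ≤ L/2`. The system is
invariant under `s ↦ -s` with `y` and `z` exchanged, which gives the same bound for `y` in terms
of `y(-L)`. Adding the two bounds and absorbing `2σ(y + z)` into the left-hand side gives the claim.
-/

open Real Set

theorem le_mul_exp_of_mul_le_deriv {f f' : ℝ → ℝ} {a b c : ℝ}
    (hf : ∀ s ∈ Icc a b, HasDerivAt f (f' s) s) (h : ∀ s ∈ Icc a b, c * f s ≤ f' s)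
    (hab : a ≤ b) : f a * exp (c * (b - a)) ≤ f b := by
  have hF : ∀ s ∈ Icc a b, HasDerivAt (fun t => f t * exp (-(c * t)))
      ((f' s - c * f s) * exp (-(c * s))) s := fun s hs =>
    ((hf s hs).mul ((hasDerivAt_id' s).const_mul c).neg.exp).congr_deriv
      (by simp only [Pi.neg_apply]; ring)
  have hmono : MonotoneOn (fun t => f t * exp (-(c * t))) (Icc a b) := by
    refine monotoneOn_of_hasDerivWithinAt_nonneg (convex_Icc a b)
      (fun s hs => (hF s hs).continuousAt.continuousWithinAt)
      (fun s hs => (hF s (interior_subset hs)).hasDerivWithinAt) fun s hs => ?_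
    have := h s (interior_subset hs)
    exact mul_nonneg (by linarith) (exp_pos _).le
  have hle := hmono (left_mem_Icc.2 hab) (right_mem_Icc.2 hab) hab
  calc f a * exp (c * (b - a)) = f a * exp (-(c * a)) * exp (c * b) := by
        rw [mul_assoc, ← exp_add]; ring_nf
    _ ≤ f b * exp (-(c * b)) * exp (c * b) := by gcongr
    _ = f b := by rw [mul_assoc, ← exp_add]; simp

theorem pos_of_mul_le_deriv {f f' : ℝ → ℝ} {a b c : ℝ}
    (hf : ∀ s ∈ Icc a b, HasDerivAt f (f' s) s) (h : ∀ s ∈ Icc a b, c * f s ≤ f' s)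
    (ha : 0 < f a) : ∀ s ∈ Icc a b, 0 < f s := fun s hs => by
  have hsub : Icc a s ⊆ Icc a b := Icc_subset_Icc_right hs.2
  have := le_mul_exp_of_mul_le_deriv (fun t ht => hf t (hsub ht)) (fun t ht => h t (hsub ht)) hs.1
  have : 0 < f a * exp (c * (s - a)) := by positivity
  linarith

structure IsMerleZaagSystem (σ : ℝ) (I : Set ℝ) (x y z x' y' z' : ℝ → ℝ) : Prop where
  nonneg : ∀ s ∈ I, 0 ≤ x s ∧ 0 ≤ y s ∧ 0 ≤ z s
  hasDerivAt : ∀ s ∈ I, HasDerivAt x (x' s) s ∧ HasDerivAt y (y' s) s ∧ HasDerivAt z (z' s) s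
  sub_le_deriv_z : ∀ s ∈ I, z s - σ * (x s + y s) ≤ z' s
  abs_deriv_x_le : ∀ s ∈ I, |x' s| ≤ σ * (x s + y s + z s)
  deriv_y_le : ∀ s ∈ I, y' s ≤ -y s + σ * (x s + z s)

namespace IsMerleZaagSystem

variable {σ a b : ℝ} {I J : Set ℝ} {x y z x' y' z' : ℝ → ℝ}

theorem mono (h : IsMerleZaagSystem σ I x y z x' y' z') (hJ : J ⊆ I) :
    IsMerleZaagSystem σ J x y z x' y' z' :=
  ⟨fun s hs => h.nonneg s (hJ hs), fun s hs => h.hasDerivAt s (hJ hs),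
    fun s hs => h.sub_le_deriv_z s (hJ hs), fun s hs => h.abs_deriv_x_le s (hJ hs),
    fun s hs => h.deriv_y_le s (hJ hs)⟩

theorem reflect (h : IsMerleZaagSystem σ (Icc a b) x y z x' y' z') :
    IsMerleZaagSystem σ (Icc (-b) (-a)) (fun t => x (-t)) (fun t => z (-t)) (fun t => y (-t))
      (fun t => -x' (-t)) (fun t => -z' (-t)) (fun t => -y' (-t)) := by
  have hmem : ∀ s ∈ Icc (-b) (-a), -s ∈ Icc a b := fun s hs =>
    ⟨le_neg.2 hs.2, neg_le.2 hs.1⟩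
  have hcomp : ∀ {f f' : ℝ → ℝ} {s : ℝ}, HasDerivAt f (f' (-s)) (-s) →
      HasDerivAt (fun t => f (-t)) (-f' (-s)) s := fun hf => by
    simpa [Function.comp_def] using hf.comp _ (hasDerivAt_neg' _)
  refine ⟨fun s hs => ?_, fun s hs => ?_, fun s hs => ?_, fun s hs => ?_, fun s hs => ?_⟩
  · obtain ⟨hx, hy, hz⟩ := h.nonneg _ (hmem s hs)
    exact ⟨hx, hz, hy⟩
  · obtain ⟨hx, hy, hz⟩ := h.hasDerivAt _ (hmem s hs)
    exact ⟨hcomp hx, hcomp hz, hcomp hy⟩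
  · linarith [h.deriv_y_le _ (hmem s hs)]
  · rw [abs_neg]
    linarith [h.abs_deriv_x_le _ (hmem s hs)]
  · linarith [h.sub_le_deriv_z _ (hmem s hs)]

theorem mul_gap_le_deriv_gap (h : IsMerleZaagSystem σ I x y z x' y' z') (hσ : 0 ≤ σ)
    (hσ8 : σ ≤ 1 / 8) : ∀ s ∈ I, (1 - 4 * σ ^ 2) * (z s - 2 * σ * (x s + y s)) ≤
      z' s - 2 * σ * (x' s + y' s) := fun s hs => by
  obtain ⟨hx, hy, -⟩ := h.nonneg s hs
  have hx' := (abs_le.1 (h.abs_deriv_x_le s hs)).2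
  have hz' := h.sub_le_deriv_z s hs
  have hy' := h.deriv_y_le s hs
  -- the difference is `σ(1 - 4σ - 8σ²) x + σ(3 - 2σ - 8σ²) y`, nonnegative for `σ ≤ 1/8`
  have hcx : 0 ≤ σ * (1 - 4 * σ - 8 * σ ^ 2) := mul_nonneg hσ (by nlinarith)
  have hcy : 0 ≤ σ * (3 - 2 * σ - 8 * σ ^ 2) := mul_nonneg hσ (by nlinarith)
  nlinarith [mul_nonneg hcx hx, mul_nonneg hcy hy, mul_le_mul_of_nonneg_left hx' hσ,
    mul_le_mul_of_nonneg_left hy' hσ]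

theorem z_le (h : IsMerleZaagSystem σ (Icc a b) x y z x' y' z') (hσ : 0 ≤ σ)
    (hσ8 : σ ≤ 1 / 8) (hab : a ≤ b) :
    z a ≤ 2 * σ * (x a + y a) + z b * exp (-((b - a) / 2)) := by
  obtain ⟨hxa, hya, -⟩ := h.nonneg a (left_mem_Icc.2 hab)
  have hzb := (h.nonneg b (right_mem_Icc.2 hab)).2.2
  by_cases hga : z a ≤ 2 * σ * (x a + y a)
  · have : 0 ≤ z b * exp (-((b - a) / 2)) := by positivity
    linarith
  have hgap : ∀ s ∈ Icc a b, 0 < z s - 2 * σ * (x s + y s) :=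
    pos_of_mul_le_deriv (f := fun t => z t - 2 * σ * (x t + y t))
      (fun s hs => (h.hasDerivAt s hs).2.2.sub
        (((h.hasDerivAt s hs).1.add (h.hasDerivAt s hs).2.1).const_mul (2 * σ)))
      (h.mul_gap_le_deriv_gap hσ hσ8) (by linarith)
  have hgrowth := le_mul_exp_of_mul_le_deriv (c := 1 / 2) (fun s hs => (h.hasDerivAt s hs).2.2)
    (fun s hs => by linarith [hgap s hs, h.sub_le_deriv_z s hs]) hab
  calc z a = z a * exp (1 / 2 * (b - a)) * exp (-((b - a) / 2)) := by
        rw [mul_assoc, ← exp_add]; ring_nf; simp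
    _ ≤ z b * exp (-((b - a) / 2)) := by gcongr
    _ ≤ 2 * σ * (x a + y a) + z b * exp (-((b - a) / 2)) := by
        have : 0 ≤ 2 * σ * (x a + y a) := by positivity
        linarith

theorem y_le (h : IsMerleZaagSystem σ (Icc a b) x y z x' y' z') (hσ : 0 ≤ σ)
    (hσ8 : σ ≤ 1 / 8) (hab : a ≤ b) :
    y b ≤ 2 * σ * (x b + z b) + y a * exp (-((b - a) / 2)) := by
  simpa [sub_eq_add_neg, add_comm] using h.reflect.z_le hσ hσ8 (neg_le_neg hab)

end IsMerleZaagSystem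

/-- Finite-interval Merle–Zaag lemma (`lem:bdd-MZ`): there is a universal `σ₀ > 0` such that
for any nonnegative absolutely continuous `x, y, z` on `[-L, L]` with `0 < x+y+z < ε` and
`z' ≥ z - σ(x+y)`, `|x'| ≤ σ(x+y+z)`, `y' ≤ -y + σ(x+z)`, if `0 < σ < σ₀` then
`y + z ≤ 8σ x + 4ε e^{-L/4}` on `[-L/2, L/2]`. -/
theorem stmt1 :
    ∃ σ₀ > (0:ℝ), ∀ (L ε σ : ℝ) (x y z x' y' z' : ℝ → ℝ),
      0 < L → 0 < ε →
      (∀ s ∈ Icc (-L) L, 0 ≤ x s ∧ 0 ≤ y s ∧ 0 ≤ z s) →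
      (∀ s ∈ Icc (-L) L, 0 < x s + y s + z s ∧ x s + y s + z s < ε) →
      (∀ s ∈ Icc (-L) L,
        HasDerivAt x (x' s) s ∧ HasDerivAt y (y' s) s ∧ HasDerivAt z (z' s) s) →
      (∀ s ∈ Icc (-L) L, z' s ≥ z s - σ * (x s + y s)) →
      (∀ s ∈ Icc (-L) L, |x' s| ≤ σ * (x s + y s + z s)) →
      (∀ s ∈ Icc (-L) L, y' s ≤ -(y s) + σ * (x s + z s)) →
      0 < σ → σ < σ₀ →
      ∀ s ∈ Icc (-L/2) (L/2), y s + z s ≤ 8 * σ * x s + 4 * ε * Real.exp (-L/4) := by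
  refine ⟨1 / 8, by norm_num, ?_⟩
  intro L ε σ x y z x' y' z' hL hε hnn hsum hderiv hz' hx' hy' hσ hσ8 s hs
  have h : IsMerleZaagSystem σ (Icc (-L) L) x y z x' y' z' := ⟨hnn, hderiv, hz', hx', hy'⟩
  have hsL : s ≤ L := by linarith [hs.2]
  have hLs : -L ≤ s := by linarith [hs.1]
  have hz := (h.mono (Icc_subset_Icc_left hLs)).z_le hσ.le hσ8.le hsL
  have hy := (h.mono (Icc_subset_Icc_right hsL)).y_le hσ.le hσ8.le hLs
  have hzL : z L * exp (-((L - s) / 2)) ≤ ε * exp (-L / 4) := by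
    have := hnn L (right_mem_Icc.2 (by linarith))
    gcongr
    · linarith [(hsum L (right_mem_Icc.2 (by linarith))).2]
    · linarith [hs.2]
  have hyL : y (-L) * exp (-((s - -L) / 2)) ≤ ε * exp (-L / 4) := by
    have := hnn (-L) (left_mem_Icc.2 (by linarith))
    gcongr
    · linarith [(hsum (-L) (left_mem_Icc.2 (by linarith))).2]
    · linarith [hs.1]
  obtain ⟨hx0, hy0, hz0⟩ := hnn s ⟨hLs, hsL⟩
  nlinarith [mul_le_mul_of_nonneg_right hσ8.le (add_nonneg hy0 hz0), mul_nonneg hσ.le hx0,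
    exp_pos (-L / 4)]
end

section
/- Suppose ρ > 0 and f ≥ 0 are C¹ functions on (-∞,0] with f(τ) → 0 and ρ(τ) → 0 as τ → -∞, satisfying ∂_τ f ≥ λ f + o(ρ) and ∂_τ ρ = o(ρ) for some constant λ > 0 (where o(ρ) denotes a function g with g/ρ → 0 as τ → -∞). Then either there exists δ > 0 with ρ(τ) + f(τ) ≲ e^{δτ} as τ → -∞, or f = o(ρ) as τ → -∞. -/
/-!
The quotient `h = f / ρ` satisfies `h' = f'/ρ - h ρ'/ρ ≥ λ h + o(1) - h o(1)`, so wherever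
`h ≥ ε` (and `τ` is negative enough) it grows with slope at least `λ ε / 4`. Were `h ≥ ε` at
arbitrarily negative times, `h` would then exceed any bound at a fixed later time; hence
`h → 0`, i.e. `f = o(ρ)`, and the second alternative always holds.
-/

open Real Set Filter Topology

theorem linear_growth_of_deriv_gt_above_level {h h' : ℝ → ℝ} {a b ε c : ℝ} (hc : 0 ≤ c)
    (hcont : ContinuousOn h (Icc a b))
    (hderiv : ∀ x ∈ Ico a b, HasDerivWithinAt h (h' x) (Ici x) x)
    (hgrow : ∀ x ∈ Ico a b, ε ≤ h x → c < h' x) (ha : ε ≤ h a) :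
    ∀ x ∈ Icc a b, ε + c * (x - a) ≤ h x := by
  have hB : ∀ x, HasDerivAt (fun x => ε + c * (x - a)) c x := fun x => by
    simpa using (((hasDerivAt_id x).sub_const a).const_mul c).const_add ε
  intro x hx
  refine neg_le_neg_iff.mp <| image_le_of_deriv_right_lt_deriv_boundary' (f := fun x => -h x)
    (B := fun x => -(ε + c * (x - a))) hcont.neg (fun x hx => (hderiv x hx).neg)
    (by simpa using ha) (fun x _ => (hB x).neg.continuousAt.continuousWithinAt)
    (fun x _ => (hB x).neg.hasDerivWithinAt) (fun y hy hyB => ?_) hx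
  have hεy : ε ≤ h y := by
    have := mul_nonneg hc (sub_nonneg.2 hy.1)
    simp only [neg_inj] at hyB
    linarith
  exact neg_lt_neg (hgrow y hy hεy)

theorem tendsto_zero_atBot_of_deriv_gt_above_level {h h' : ℝ → ℝ}
    (hnonneg : ∀ᶠ x in atBot, 0 ≤ h x) (hderiv : ∀ᶠ x in atBot, HasDerivAt h (h' x) x)
    (hgrow : ∀ ε > 0, ∃ c > 0, ∀ᶠ x in atBot, ε ≤ h x → c < h' x) :
    Tendsto h atBot (𝓝 0) := by
  refine Metric.tendsto_nhds.2 fun ε hε => ?_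
  obtain ⟨c, hc, hgrowε⟩ := hgrow (ε / 2) (by positivity)
  obtain ⟨T, hT⟩ := eventually_atBot.1 ((hnonneg.and hderiv).and hgrowε)
  set S := T - h T / c
  have hST : S ≤ T := sub_le_self _ (div_nonneg (hT T le_rfl).1.1 hc.le)
  have hsmall : ∀ τ < S, h τ < ε / 2 := by
    intro τ hτ
    by_contra! hτε
    have hlin := linear_growth_of_deriv_gt_above_level hc.le
      (fun x hx => (hT x hx.2).1.2.continuousAt.continuousWithinAt)
      (fun x hx => (hT x hx.2.le).1.2.hasDerivWithinAt)
      (fun x hx => (hT x hx.2.le).2) hτε T ⟨hτ.le.trans hST, le_rfl⟩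
    have : h T < c * (T - τ) := by
      rw [← div_lt_iff₀' hc]
      linarith
    linarith
  filter_upwards [eventually_lt_atBot S] with τ hτ
  rw [Real.dist_eq, sub_zero, abs_of_nonneg (hT τ (hτ.le.trans hST)).1.1]
  linarith [hsmall τ hτ]

theorem le_quotient_deriv_of_le {f ρ f' ρ' g lam : ℝ} (hρ : 0 < ρ)
    (hf' : lam * f + g ≤ f') :
    lam * (f / ρ) + g / ρ - f / ρ * (ρ' / ρ) ≤ (f' * ρ - f * ρ') / ρ ^ 2 := by
  have hquot : (f' * ρ - f * ρ') / ρ ^ 2 = f' / ρ - f / ρ * (ρ' / ρ) := by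
    field_simp
  have hmain : lam * (f / ρ) + g / ρ ≤ f' / ρ := by
    rw [mul_div_assoc', ← add_div]
    exact div_le_div_of_nonneg_right hf' hρ.le
  linarith

theorem stmt2_general (f ρ f' ρ' g₁ g₂ : ℝ → ℝ) (lam : ℝ) (hlam : 0 < lam)
    (hρpos : ∀ τ ≤ (0:ℝ), 0 < ρ τ) (hfnn : ∀ τ ≤ (0:ℝ), 0 ≤ f τ)
    (hf : ∀ τ ≤ (0:ℝ), HasDerivAt f (f' τ) τ)
    (hρ : ∀ τ ≤ (0:ℝ), HasDerivAt ρ (ρ' τ) τ)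
    (hineq : ∀ τ ≤ (0:ℝ), f' τ ≥ lam * f τ + g₁ τ)
    (hg₁ : Tendsto (fun τ => g₁ τ / ρ τ) atBot (nhds 0))
    (hρeq : ∀ τ ≤ (0:ℝ), ρ' τ = g₂ τ)
    (hg₂ : Tendsto (fun τ => g₂ τ / ρ τ) atBot (nhds 0)) :
    (∃ δ > (0:ℝ), ∃ C > (0:ℝ), ∀ᶠ τ in atBot, ρ τ + f τ ≤ C * Real.exp (δ * τ)) ∨
      Tendsto (fun τ => f τ / ρ τ) atBot (nhds 0) := by
  right
  have hneg : ∀ᶠ τ in atBot, τ ≤ (0:ℝ) := eventually_le_atBot 0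
  refine tendsto_zero_atBot_of_deriv_gt_above_level
    (h' := fun τ => (f' τ * ρ τ - f τ * ρ' τ) / ρ τ ^ 2)
    (hneg.mono fun τ hτ => div_nonneg (hfnn τ hτ) (hρpos τ hτ).le)
    (hneg.mono fun τ hτ => (hf τ hτ).div (hρ τ hτ) (hρpos τ hτ).ne')
    fun ε hε => ⟨lam * ε / 4, by positivity, ?_⟩
  filter_upwards [hneg,
    hg₁.eventually (lt_mem_nhds (neg_neg_of_pos (by positivity : 0 < lam * ε / 4))),
    hg₂.eventually (gt_mem_nhds (half_pos hlam))] with τ hτ hsmall₁ hsmall₂ hετ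
  have hlower := le_quotient_deriv_of_le (ρ' := ρ' τ) (hρpos τ hτ) (hineq τ hτ)
  rw [hρeq τ hτ] at hlower ⊢
  -- `h' ≥ λ h + g₁/ρ - h λ/2 > λ ε/2 - λ ε/4` once `h ≥ ε`
  nlinarith [mul_le_mul_of_nonneg_left hsmall₂.le (hε.le.trans hετ)]

/-- ODE lemma (`lem:ode-decay1+`, case λ > 0): if `f' ≥ λ f + o(ρ)` and `ρ' = o(ρ)` with
`f ≥ 0`, `ρ > 0`, both tending to `0` at `-∞`, then either `ρ + f ≲ e^{δτ}` for some `δ > 0`,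
or `f = o(ρ)` as `τ → -∞`. -/
theorem stmt2 (f ρ f' ρ' g₁ g₂ : ℝ → ℝ) (lam : ℝ) (hlam : 0 < lam)
    (hρpos : ∀ τ ≤ (0:ℝ), 0 < ρ τ) (hfnn : ∀ τ ≤ (0:ℝ), 0 ≤ f τ)
    (hf : ∀ τ ≤ (0:ℝ), HasDerivAt f (f' τ) τ)
    (hρ : ∀ τ ≤ (0:ℝ), HasDerivAt ρ (ρ' τ) τ)
    (hf'c : ContinuousOn f' (Iic 0)) (hρ'c : ContinuousOn ρ' (Iic 0))
    (hf0 : Tendsto f atBot (nhds 0)) (hρ0 : Tendsto ρ atBot (nhds 0))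
    (hineq : ∀ τ ≤ (0:ℝ), f' τ ≥ lam * f τ + g₁ τ)
    (hg₁ : Tendsto (fun τ => g₁ τ / ρ τ) atBot (nhds 0))
    (hρeq : ∀ τ ≤ (0:ℝ), ρ' τ = g₂ τ)
    (hg₂ : Tendsto (fun τ => g₂ τ / ρ τ) atBot (nhds 0)) :
    (∃ δ > (0:ℝ), ∃ C > (0:ℝ), ∀ᶠ τ in atBot, ρ τ + f τ ≤ C * Real.exp (δ * τ)) ∨
      Tendsto (fun τ => f τ / ρ τ) atBot (nhds 0) :=
  stmt2_general f ρ f' ρ' g₁ g₂ lam hlam hρpos hfnn hf hρ hineq hg₁ hρeq hg₂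
end

section
/- Suppose ρ > 0 and f ≥ 0 are C¹ functions on (-∞,0] with f(τ) → 0 and ρ(τ) → 0 as τ → -∞, satisfying ∂_τ f ≤ λ f + o(ρ) and ∂_τ ρ = o(ρ) for some constant λ < 0. Then either there exists δ > 0 with ρ(τ) + f(τ) ≲ e^{δτ} as τ → -∞, or f = o(ρ) as τ → -∞. -/
/-!
With `ε > 0` fixed, the hypotheses give `(f - ερ)' ≤ λ (f - ερ)` far enough to the left: the
`o(ρ)` error in `f'` and the term `ε ρ'` are each absorbed by `(-λ/2) ε ρ`. Hence
`e^{-λτ} (f - ερ)` is nonincreasing there, and it tends to `0` at `-∞` because `-λ > 0` and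
`f - ερ` is bounded. So `f ≤ ερ` eventually, i.e. `f = o(ρ)`: the second alternative always holds.
-/

open Real Set Filter Topology

theorem antitoneOn_exp_mul_of_hasDerivAt_le {h h' : ℝ → ℝ} {lam T : ℝ}
    (hh : ∀ τ ≤ T, HasDerivAt h (h' τ) τ) (hle : ∀ τ ≤ T, h' τ ≤ lam * h τ) :
    AntitoneOn (fun τ => exp (-lam * τ) * h τ) (Iic T) := by
  have hderiv : ∀ τ ≤ T, HasDerivAt (fun τ => exp (-lam * τ) * h τ)
      (exp (-lam * τ) * (h' τ - lam * h τ)) τ := by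
    intro τ hτ
    have hexp : HasDerivAt (fun τ => exp (-lam * τ)) (exp (-lam * τ) * -lam) τ := by
      simpa [mul_comm] using ((hasDerivAt_id τ).const_mul (-lam)).exp
    exact (hexp.mul (hh τ hτ)).congr_deriv (by ring)
  refine antitoneOn_of_hasDerivWithinAt_nonpos (f' := fun τ => exp (-lam * τ) * (h' τ - lam * h τ))
    (convex_Iic T)
    (fun τ hτ => (hderiv τ hτ).continuousAt.continuousWithinAt) (fun τ hτ => ?_) (fun τ hτ => ?_)
  · rw [interior_Iic] at hτ
    exact (hderiv τ hτ.le).hasDerivWithinAt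
  · rw [interior_Iic] at hτ
    exact mul_nonpos_of_nonneg_of_nonpos (exp_pos _).le (by linarith [hle τ hτ.le])

theorem eventually_nonpos_of_hasDerivAt_le_mul_self {h h' : ℝ → ℝ} {lam : ℝ} (hlam : lam < 0)
    (hh : ∀ᶠ τ in atBot, HasDerivAt h (h' τ) τ) (hle : ∀ᶠ τ in atBot, h' τ ≤ lam * h τ)
    (hbdd : IsBoundedUnder (· ≤ ·) atBot h) : ∀ᶠ τ in atBot, h τ ≤ 0 := by
  obtain ⟨T, hT⟩ := (hh.and hle).exists_forall_of_atBot
  obtain ⟨M, hM⟩ := hbdd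
  have hanti := antitoneOn_exp_mul_of_hasDerivAt_le (fun τ hτ => (hT τ hτ).1) fun τ hτ => (hT τ hτ).2
  have hweight : Tendsto (fun σ => exp (-lam * σ) * max M 0) atBot (𝓝 0) := by
    simpa using (tendsto_exp_atBot.comp
      (tendsto_id.const_mul_atBot (neg_pos.2 hlam))).mul_const (max M 0)
  filter_upwards [eventually_le_atBot T] with τ hτ
  have hw : exp (-lam * τ) * h τ ≤ 0 := by
    refine ge_of_tendsto hweight ?_
    filter_upwards [eventually_le_atBot τ, eventually_map.1 hM] with σ hστ hσM
    calc exp (-lam * τ) * h τ ≤ exp (-lam * σ) * h σ := hanti (hστ.trans hτ) hτ hστ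
      _ ≤ exp (-lam * σ) * max M 0 :=
        mul_le_mul_of_nonneg_left (hσM.trans (le_max_left _ _)) (exp_pos _).le
  exact nonpos_of_mul_nonpos_right hw (exp_pos _)

theorem eventually_abs_le_mul_of_tendsto_div {α : Type*} {l : Filter α} {g ρ : α → ℝ}
    (hρ : ∀ᶠ x in l, 0 < ρ x) (hg : Tendsto (fun x => g x / ρ x) l (𝓝 0)) {c : ℝ} (hc : 0 < c) :
    ∀ᶠ x in l, |g x| ≤ c * ρ x := by
  filter_upwards [hρ, NormedAddGroup.tendsto_nhds_zero.1 hg c hc] with x hρx hgx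
  rw [Real.norm_eq_abs, abs_div, abs_of_pos hρx, div_lt_iff₀ hρx] at hgx
  exact hgx.le

theorem stmt3_general (f ρ f' ρ' g₁ g₂ : ℝ → ℝ) (lam : ℝ) (hlam : lam < 0)
    (hρpos : ∀ τ ≤ (0:ℝ), 0 < ρ τ) (hfnn : ∀ τ ≤ (0:ℝ), 0 ≤ f τ)
    (hf : ∀ τ ≤ (0:ℝ), HasDerivAt f (f' τ) τ)
    (hρ : ∀ τ ≤ (0:ℝ), HasDerivAt ρ (ρ' τ) τ)
    (hf0 : Tendsto f atBot (nhds 0)) (hρ0 : Tendsto ρ atBot (nhds 0))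
    (hineq : ∀ τ ≤ (0:ℝ), f' τ ≤ lam * f τ + g₁ τ)
    (hg₁ : Tendsto (fun τ => g₁ τ / ρ τ) atBot (nhds 0))
    (hρeq : ∀ τ ≤ (0:ℝ), ρ' τ = g₂ τ)
    (hg₂ : Tendsto (fun τ => g₂ τ / ρ τ) atBot (nhds 0)) :
    (∃ δ > (0:ℝ), ∃ C > (0:ℝ), ∀ᶠ τ in atBot, ρ τ + f τ ≤ C * Real.exp (δ * τ)) ∨
      Tendsto (fun τ => f τ / ρ τ) atBot (nhds 0) := by
  right
  have h0 : ∀ᶠ τ in atBot, τ ≤ (0:ℝ) := eventually_le_atBot 0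
  have hρpos' : ∀ᶠ τ in atBot, 0 < ρ τ := h0.mono hρpos
  have hμ : 0 < -lam / 2 := by linarith
  refine tendsto_order.2 ⟨fun a ha => ?_, fun a ha => ?_⟩
  · filter_upwards [h0] with τ hτ using ha.trans_le (div_nonneg (hfnn τ hτ) (hρpos τ hτ).le)
  · have he : 0 < a / 2 := half_pos ha
    have hle : ∀ᶠ τ in atBot, f τ - a / 2 * ρ τ ≤ 0 := by
      refine eventually_nonpos_of_hasDerivAt_le_mul_self hlam (h' := fun τ => f' τ - a / 2 * ρ' τ)
        (h0.mono fun τ hτ => (hf τ hτ).sub ((hρ τ hτ).const_mul _)) ?_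
        (hf0.sub (hρ0.const_mul _)).isBoundedUnder_le
      filter_upwards [h0, eventually_abs_le_mul_of_tendsto_div hρpos' hg₁ (mul_pos he hμ),
        eventually_abs_le_mul_of_tendsto_div hρpos' hg₂ hμ] with τ hτ hg₁τ hg₂τ
      rw [← hρeq τ hτ] at hg₂τ
      have hρ'τ : a / 2 * -ρ' τ ≤ a / 2 * (-lam / 2 * ρ τ) :=
        mul_le_mul_of_nonneg_left ((neg_le_abs _).trans hg₂τ) he.le
      linarith [hineq τ hτ, le_abs_self (g₁ τ)]
    filter_upwards [hρpos', hle] with τ hρτ hτ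
    rw [div_lt_iff₀ hρτ]
    nlinarith

/-- ODE lemma (`lem:ode-decay1+`, case λ < 0): if `f' ≤ λ f + o(ρ)` and `ρ' = o(ρ)` with
`f ≥ 0`, `ρ > 0`, both tending to `0` at `-∞`, then either `ρ + f ≲ e^{δτ}` for some `δ > 0`,
or `f = o(ρ)` as `τ → -∞`. -/
theorem stmt3 (f ρ f' ρ' g₁ g₂ : ℝ → ℝ) (lam : ℝ) (hlam : lam < 0)
    (hρpos : ∀ τ ≤ (0:ℝ), 0 < ρ τ) (hfnn : ∀ τ ≤ (0:ℝ), 0 ≤ f τ)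
    (hf : ∀ τ ≤ (0:ℝ), HasDerivAt f (f' τ) τ)
    (hρ : ∀ τ ≤ (0:ℝ), HasDerivAt ρ (ρ' τ) τ)
    (hf'c : ContinuousOn f' (Iic 0)) (hρ'c : ContinuousOn ρ' (Iic 0))
    (hf0 : Tendsto f atBot (nhds 0)) (hρ0 : Tendsto ρ atBot (nhds 0))
    (hineq : ∀ τ ≤ (0:ℝ), f' τ ≤ lam * f τ + g₁ τ)
    (hg₁ : Tendsto (fun τ => g₁ τ / ρ τ) atBot (nhds 0))
    (hρeq : ∀ τ ≤ (0:ℝ), ρ' τ = g₂ τ)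
    (hg₂ : Tendsto (fun τ => g₂ τ / ρ τ) atBot (nhds 0)) :
    (∃ δ > (0:ℝ), ∃ C > (0:ℝ), ∀ᶠ τ in atBot, ρ τ + f τ ≤ C * Real.exp (δ * τ)) ∨
      Tendsto (fun τ => f τ / ρ τ) atBot (nhds 0) :=
  stmt3_general f ρ f' ρ' g₁ g₂ lam hlam hρpos hfnn hf hρ hf0 hρ0 hineq hg₁ hρeq hg₂
end

section
/- Suppose f and ρ > 0 are C¹ functions on (-∞,0] with f(τ) → 0 and ρ(τ) → 0 as τ → -∞, satisfying ∂_τ f = λ f - μ ρ + o(ρ) and ∂_τ ρ = o(ρ), where λ ≠ 0 and μ are constants. Then either there exists δ > 0 such that ρ(τ) ≲ e^{δτ} for τ negative enough, or f = λ^{-1} μ ρ + o(ρ) as τ → -∞. -/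
/-!
Put `h = f - λ⁻¹ μ ρ`, so that `h' = λ h + o(ρ)`. Since `ρ'/ρ → 0`, `ρ` is subexponential:
`e^{δτ} = o(ρ)` for every `δ > 0`. Compare `φ = h e^{-λτ}` with the barrier `ε ρ e^{-λτ}`, whose
derivative has the sign of `-λ` and absolute value at least `|φ'|` once `τ` is negative enough.
If `λ < 0`, comparing with `σ → -∞` (where `φ → 0` because `h → 0`) gives `|h| ≤ ε ρ`. If
`λ > 0`, comparing with a fixed `T` gives `|h| ≤ C e^{λτ} + ε ρ`, and `e^{λτ} = o(ρ)`. So the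
second alternative always holds.
-/

open Real Set Filter Topology Asymptotics

theorem abs_sub_le_sub_of_abs_deriv_le {φ φ' B B' : ℝ → ℝ} {a b : ℝ} (hab : a ≤ b)
    (hφ : ∀ x ∈ Icc a b, HasDerivAt φ (φ' x) x) (hB : ∀ x ∈ Icc a b, HasDerivAt B (B' x) x)
    (hle : ∀ x ∈ Ico a b, |φ' x| ≤ B' x) : |φ b - φ a| ≤ B b - B a :=
  image_norm_le_of_norm_deriv_right_le_deriv_boundary' (f := fun x => φ x - φ a)
    (B := fun x => B x - B a)
    (fun x hx => ((hφ x hx).continuousAt.sub continuousAt_const).continuousWithinAt)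
    (fun x hx => ((hφ x (Ico_subset_Icc_self hx)).sub_const _).hasDerivWithinAt)
    (by simp)
    (fun x hx => ((hB x hx).continuousAt.sub continuousAt_const).continuousWithinAt)
    (fun x hx => ((hB x (Ico_subset_Icc_self hx)).sub_const _).hasDerivWithinAt)
    hle ⟨hab, le_rfl⟩

theorem HasDerivAt.mul_exp_const_mul {u : ℝ → ℝ} {u' x : ℝ} (hu : HasDerivAt u u' x) (c : ℝ) :
    HasDerivAt (fun s => u s * Real.exp (c * s)) ((u' + c * u x) * Real.exp (c * x)) x := by
  have hexp : HasDerivAt (fun s => Real.exp (c * s)) (Real.exp (c * x) * c) x := by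
    simpa using ((hasDerivAt_id x).const_mul c).exp
  exact (hu.mul hexp).congr_deriv (by ring)

theorem isLittleO_iff_tendsto_div_of_eventually_pos {α : Type*} {l : Filter α} {f g : α → ℝ}
    (hg : ∀ᶠ x in l, 0 < g x) : f =o[l] g ↔ Tendsto (fun x => f x / g x) l (𝓝 0) :=
  isLittleO_iff_tendsto' (hg.mono fun _ hx h0 => absurd h0 hx.ne')

section SubexponentialGrowth

variable {ρ ρ' : ℝ → ℝ}

theorem isBigO_exp_mul_atBot_of_isLittleO_deriv {δ : ℝ} (hδ : 0 < δ)
    (hpos : ∀ᶠ τ in atBot, 0 < ρ τ) (hρ : ∀ᶠ τ in atBot, HasDerivAt ρ (ρ' τ) τ)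
    (hρ' : ρ' =o[atBot] ρ) : (fun τ => exp (δ * τ)) =O[atBot] ρ := by
  obtain ⟨T, hT⟩ := eventually_atBot.1 (hpos.and (hρ.and (isLittleO_iff.1 hρ' hδ)))
  refine IsBigO.of_bound (exp (δ * T) / ρ T) (eventually_atBot.2 ⟨T, fun τ hτ => ?_⟩)
  have hρτ := (hT τ hτ).1
  have hρT := (hT T le_rfl).1
  have hlog : |log (ρ T) - log (ρ τ)| ≤ δ * T - δ * τ :=
    abs_sub_le_sub_of_abs_deriv_le hτ (φ' := fun s => ρ' s / ρ s) (B' := fun _ => δ)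
      (fun s hs => (hT s hs.2).2.1.log (hT s hs.2).1.ne')
      (fun s _ => by simpa using (hasDerivAt_id s).const_mul δ)
      (fun s hs => by
        obtain ⟨hρs, -, hs'⟩ := hT s hs.2.le
        rw [Real.norm_eq_abs, Real.norm_eq_abs, abs_of_pos hρs] at hs'
        rwa [abs_div, abs_of_pos hρs, div_le_iff₀ hρs])
  have hexp : log (ρ T) + δ * τ ≤ log (ρ τ) + δ * T := by linarith [(abs_le.1 hlog).2]
  rw [norm_of_nonneg (exp_pos _).le, norm_of_nonneg hρτ.le, div_mul_eq_mul_div,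
    le_div_iff₀ hρT]
  calc exp (δ * τ) * ρ T = exp (log (ρ T) + δ * τ) := by rw [exp_add, exp_log hρT, mul_comm]
    _ ≤ exp (log (ρ τ) + δ * T) := exp_le_exp.2 hexp
    _ = exp (δ * T) * ρ τ := by rw [exp_add, exp_log hρτ, mul_comm]

theorem isLittleO_exp_mul_atBot_of_isLittleO_deriv {δ : ℝ} (hδ : 0 < δ)
    (hpos : ∀ᶠ τ in atBot, 0 < ρ τ) (hρ : ∀ᶠ τ in atBot, HasDerivAt ρ (ρ' τ) τ)
    (hρ' : ρ' =o[atBot] ρ) : (fun τ => exp (δ * τ)) =o[atBot] ρ := by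
  refine (isLittleO_exp_comp_exp_comp.2 ?_).trans_isBigO
    (isBigO_exp_mul_atBot_of_isLittleO_deriv (half_pos hδ) hpos hρ hρ')
  have hsub : (fun τ => δ / 2 * τ - δ * τ) = fun τ => -(δ / 2) * τ := by ext; ring
  rw [hsub]
  exact tendsto_id.const_mul_atBot_of_neg (by linarith)

end SubexponentialGrowth

section LinearODE

variable {h e ρ ρ' : ℝ → ℝ} {lam : ℝ}

theorem isLittleO_of_hasDerivAt_eq_mul_add_of_pos (hlam : 0 < lam)
    (hpos : ∀ᶠ τ in atBot, 0 < ρ τ) (hh : ∀ᶠ τ in atBot, HasDerivAt h (lam * h τ + e τ) τ)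
    (hρ : ∀ᶠ τ in atBot, HasDerivAt ρ (ρ' τ) τ) (he : e =o[atBot] ρ) (hρ' : ρ' =o[atBot] ρ) :
    h =o[atBot] ρ := by
  refine isLittleO_iff.2 fun ε hε => ?_
  obtain ⟨T, hT⟩ := eventually_atBot.1 (hpos.and (hh.and (hρ.and
    ((isLittleO_iff.1 he (by positivity : 0 < ε * lam / 4)).and
      (isLittleO_iff.1 hρ' (half_pos hlam))))))
  set φ : ℝ → ℝ := fun s => h s * exp (-lam * s)
  have hφ : ∀ τ ≤ T, |φ T - φ τ| ≤ ε / 2 * ρ τ * exp (-lam * τ) := by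
    intro τ hτ
    have hbarrier := abs_sub_le_sub_of_abs_deriv_le hτ
      (B := fun s => -(ε / 2 * ρ s) * exp (-lam * s))
      (fun s hs => ((hT s hs.2).2.1.mul_exp_const_mul (-lam)))
      (fun s hs => (((hT s hs.2).2.2.1.const_mul (ε / 2)).neg.mul_exp_const_mul (-lam)))
      (fun s hs => by
        obtain ⟨hρs, -, -, hes, hρ's⟩ := hT s hs.2.le
        simp only [Real.norm_eq_abs, abs_of_pos hρs] at hes hρ's
        rw [Pi.neg_apply, show lam * h s + e s + -lam * h s = e s by ring, abs_mul,
          abs_of_pos (exp_pos _)]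
        refine mul_le_mul_of_nonneg_right ?_ (exp_pos _).le
        nlinarith [mul_le_mul_of_nonneg_left (abs_le.1 hρ's).2 hε.le])
    have hρT := (hT T le_rfl).1
    have : 0 ≤ ε / 2 * ρ T * exp (-lam * T) := by positivity
    linarith
  have hbound : ∀ τ ≤ T, |h τ| ≤ |φ T| * exp (lam * τ) + ε / 2 * ρ τ := by
    intro τ hτ
    have hexp : exp (-lam * τ) * exp (lam * τ) = 1 := by rw [← exp_add]; simp
    have hhτ : h τ = φ τ * exp (lam * τ) := by simp only [φ]; rw [mul_assoc, hexp, mul_one]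
    have hφτ : |φ τ| ≤ |φ T| + ε / 2 * ρ τ * exp (-lam * τ) := by
      have := abs_sub_abs_le_abs_sub (φ τ) (φ T)
      rw [abs_sub_comm] at this
      linarith [hφ τ hτ]
    calc |h τ| = |φ τ| * exp (lam * τ) := by rw [hhτ, abs_mul, abs_of_pos (exp_pos _)]
      _ ≤ (|φ T| + ε / 2 * ρ τ * exp (-lam * τ)) * exp (lam * τ) := by gcongr
      _ = |φ T| * exp (lam * τ) + ε / 2 * ρ τ := by
        rw [add_mul, mul_assoc (ε / 2 * ρ τ), hexp, mul_one]
  have hsmall := isLittleO_iff.1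
    ((isLittleO_exp_mul_atBot_of_isLittleO_deriv hlam hpos hρ hρ').const_mul_left |φ T|)
    (half_pos hε)
  filter_upwards [hsmall, eventually_le_atBot T] with τ hsmallτ hτ
  have hρτ := (hT τ hτ).1
  simp only [Real.norm_eq_abs, abs_mul, abs_abs, abs_of_pos (exp_pos _), abs_of_pos hρτ]
    at hsmallτ ⊢
  linarith [hbound τ hτ]

theorem isLittleO_of_hasDerivAt_eq_mul_add_of_neg (hlam : lam < 0)
    (hpos : ∀ᶠ τ in atBot, 0 < ρ τ) (hh : ∀ᶠ τ in atBot, HasDerivAt h (lam * h τ + e τ) τ)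
    (hρ : ∀ᶠ τ in atBot, HasDerivAt ρ (ρ' τ) τ) (hh0 : Tendsto h atBot (𝓝 0))
    (he : e =o[atBot] ρ) (hρ' : ρ' =o[atBot] ρ) : h =o[atBot] ρ := by
  refine isLittleO_iff.2 fun ε hε => ?_
  obtain ⟨T, hT⟩ := eventually_atBot.1 (hpos.and (hh.and (hρ.and
    ((isLittleO_iff.1 he (by nlinarith : 0 < -(ε * lam) / 2)).and
      (isLittleO_iff.1 hρ' (by linarith : 0 < -lam / 2))))))
  set φ : ℝ → ℝ := fun s => h s * exp (-lam * s)
  have hφ : ∀ σ τ, σ ≤ τ → τ ≤ T → |φ τ - φ σ| ≤ ε * ρ τ * exp (-lam * τ) := by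
    intro σ τ hστ hτ
    have hbarrier := abs_sub_le_sub_of_abs_deriv_le hστ
      (B := fun s => ε * ρ s * exp (-lam * s))
      (fun s hs => ((hT s (hs.2.trans hτ)).2.1.mul_exp_const_mul (-lam)))
      (fun s hs => (((hT s (hs.2.trans hτ)).2.2.1.const_mul ε).mul_exp_const_mul (-lam)))
      (fun s hs => by
        obtain ⟨hρs, -, -, hes, hρ's⟩ := hT s (hs.2.le.trans hτ)
        simp only [Real.norm_eq_abs, abs_of_pos hρs] at hes hρ's
        rw [show lam * h s + e s + -lam * h s = e s by ring, abs_mul, abs_of_pos (exp_pos _)]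
        refine mul_le_mul_of_nonneg_right ?_ (exp_pos _).le
        nlinarith [mul_le_mul_of_nonneg_left (abs_le.1 hρ's).1 hε.le])
    have : 0 ≤ ε * ρ σ * exp (-lam * σ) := by have := (hT σ (hστ.trans hτ)).1; positivity
    linarith
  have hφ0 : Tendsto φ atBot (𝓝 0) := by
    simpa [φ] using hh0.mul (tendsto_exp_atBot.comp (tendsto_id.const_mul_atBot (neg_pos.2 hlam)))
  filter_upwards [eventually_le_atBot T] with τ hτ
  have hφτ : |φ τ| ≤ ε * ρ τ * exp (-lam * τ) := by
    simpa using le_of_tendsto (tendsto_const_nhds.sub hφ0).abs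
      ((eventually_le_atBot τ).mono fun σ hσ => hφ σ τ hσ hτ)
  have hρτ := (hT τ hτ).1
  rw [Real.norm_eq_abs, Real.norm_eq_abs, abs_of_pos hρτ]
  simp only [φ, abs_mul, abs_of_pos (exp_pos _)] at hφτ
  exact le_of_mul_le_mul_right hφτ (exp_pos _)

theorem isLittleO_of_hasDerivAt_eq_mul_add (hlam : lam ≠ 0)
    (hpos : ∀ᶠ τ in atBot, 0 < ρ τ) (hh : ∀ᶠ τ in atBot, HasDerivAt h (lam * h τ + e τ) τ)
    (hρ : ∀ᶠ τ in atBot, HasDerivAt ρ (ρ' τ) τ) (hh0 : Tendsto h atBot (𝓝 0))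
    (he : e =o[atBot] ρ) (hρ' : ρ' =o[atBot] ρ) : h =o[atBot] ρ := by
  rcases hlam.lt_or_gt with hneg | hpos'
  · exact isLittleO_of_hasDerivAt_eq_mul_add_of_neg hneg hpos hh hρ hh0 he hρ'
  · exact isLittleO_of_hasDerivAt_eq_mul_add_of_pos hpos' hpos hh hρ he hρ'

end LinearODE

theorem stmt4_general (f ρ f' ρ' g₁ : ℝ → ℝ) (lam μ : ℝ) (hlam : lam ≠ 0)
    (hρpos : ∀ τ ≤ (0:ℝ), 0 < ρ τ)
    (hf : ∀ τ ≤ (0:ℝ), HasDerivAt f (f' τ) τ)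
    (hρ : ∀ τ ≤ (0:ℝ), HasDerivAt ρ (ρ' τ) τ)
    (hf0 : Tendsto f atBot (nhds 0)) (hρ0 : Tendsto ρ atBot (nhds 0))
    (heq : ∀ τ ≤ (0:ℝ), f' τ = lam * f τ - μ * ρ τ + g₁ τ)
    (hg₁ : Tendsto (fun τ => g₁ τ / ρ τ) atBot (nhds 0))
    (hρ' : Tendsto (fun τ => ρ' τ / ρ τ) atBot (nhds 0)) :
    (∃ δ > (0:ℝ), ∃ C > (0:ℝ), ∀ᶠ τ in atBot, ρ τ ≤ C * Real.exp (δ * τ)) ∨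
      Tendsto (fun τ => (f τ - lam⁻¹ * μ * ρ τ) / ρ τ) atBot (nhds 0) := by
  right
  have hpos : ∀ᶠ τ in atBot, 0 < ρ τ := eventually_atBot.2 ⟨0, hρpos⟩
  have hρ'o : ρ' =o[atBot] ρ := (isLittleO_iff_tendsto_div_of_eventually_pos hpos).2 hρ'
  have hg₁o : g₁ =o[atBot] ρ := (isLittleO_iff_tendsto_div_of_eventually_pos hpos).2 hg₁
  have hderiv : ∀ᶠ τ in atBot, HasDerivAt (fun τ => f τ - lam⁻¹ * μ * ρ τ)
      (lam * (f τ - lam⁻¹ * μ * ρ τ) + (g₁ τ - lam⁻¹ * μ * ρ' τ)) τ := by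
    refine eventually_atBot.2 ⟨0, fun τ hτ =>
      ((hf τ hτ).sub ((hρ τ hτ).const_mul (lam⁻¹ * μ))).congr_deriv ?_⟩
    rw [heq τ hτ]
    field_simp
    ring
  refine (isLittleO_iff_tendsto_div_of_eventually_pos hpos).1
    (isLittleO_of_hasDerivAt_eq_mul_add hlam hpos hderiv (eventually_atBot.2 ⟨0, hρ⟩) ?_
      (hg₁o.sub (hρ'o.const_mul_left _)) hρ'o)
  simpa using hf0.sub (hρ0.const_mul (lam⁻¹ * μ))

/-- ODE lemma (`lem:ode-decay2`): if `f' = λ f - μ ρ + o(ρ)` and `ρ' = o(ρ)` with `ρ > 0`,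
both `f` and `ρ` tending to `0` at `-∞`, and `λ ≠ 0`, then either `ρ ≲ e^{δτ}` for some
`δ > 0`, or `f = λ⁻¹ μ ρ + o(ρ)` as `τ → -∞`. -/
theorem stmt4 (f ρ f' ρ' g₁ : ℝ → ℝ) (lam μ : ℝ) (hlam : lam ≠ 0)
    (hρpos : ∀ τ ≤ (0:ℝ), 0 < ρ τ)
    (hf : ∀ τ ≤ (0:ℝ), HasDerivAt f (f' τ) τ)
    (hρ : ∀ τ ≤ (0:ℝ), HasDerivAt ρ (ρ' τ) τ)
    (hf'c : ContinuousOn f' (Iic 0)) (hρ'c : ContinuousOn ρ' (Iic 0))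
    (hf0 : Tendsto f atBot (nhds 0)) (hρ0 : Tendsto ρ atBot (nhds 0))
    (heq : ∀ τ ≤ (0:ℝ), f' τ = lam * f τ - μ * ρ τ + g₁ τ)
    (hg₁ : Tendsto (fun τ => g₁ τ / ρ τ) atBot (nhds 0))
    (hρ' : Tendsto (fun τ => ρ' τ / ρ τ) atBot (nhds 0)) :
    (∃ δ > (0:ℝ), ∃ C > (0:ℝ), ∀ᶠ τ in atBot, ρ τ ≤ C * Real.exp (δ * τ)) ∨
      Tendsto (fun τ => (f τ - lam⁻¹ * μ * ρ τ) / ρ τ) atBot (nhds 0) :=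
  stmt4_general f ρ f' ρ' g₁ lam μ hlam hρpos hf hρ hf0 hρ0 heq hg₁ hρ'
end

section
/- Suppose ρ > 0 and f are C¹ functions on (-∞,0] with f(τ) → 0 and ρ(τ) → 0 as τ → -∞, satisfying ∂_τ f = λ f + O(ρ) and ∂_τ ρ = o(ρ), where λ ≠ 0 is a constant. Then either there exists δ > 0 such that ρ(τ) ≲ e^{δτ}, or |f(τ)| ≲ ρ(τ) for τ negative enough. -/
/-!
Put `u = e^{-λτ} f` and `Φ = e^{-λτ} ρ`. Then `|u'| ≤ C e^{-λτ} ρ`, while `ρ'/ρ → 0` makes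
`-sign(λ) Φ'` at least a fixed multiple of `|λ| e^{-λτ} ρ`, so a multiple of `±Φ` dominates `u` in the sense of
derivatives. For `λ < 0`, comparing on `[a, τ]` and letting `a → -∞` (where `f → 0`) gives
`|f| ≲ ρ`; for `λ > 0`, comparing on `[τ, T]` gives the same bound, the boundary term at `T` being
controlled because `ρ` decays more slowly than `e^{λτ}`. So the second alternative always holds.
-/

open Real Set Filter Topology

theorem abs_sub_le_sub_of_abs_deriv_le_s5 {u Φ u' Φ' : ℝ → ℝ} {a b : ℝ} (hab : a ≤ b)
    (hu : ∀ x ∈ Icc a b, HasDerivAt u (u' x) x) (hΦ : ∀ x ∈ Icc a b, HasDerivAt Φ (Φ' x) x)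
    (hbound : ∀ x ∈ Ico a b, |u' x| ≤ Φ' x) : |u b - u a| ≤ Φ b - Φ a := by
  have hu_sub : ∀ x ∈ Icc a b, HasDerivAt (fun x => u x - u a) (u' x) x :=
    fun x hx => (hu x hx).sub_const (u a)
  have hΦ_sub : ∀ x ∈ Icc a b, HasDerivAt (fun x => Φ x - Φ a) (Φ' x) x :=
    fun x hx => (hΦ x hx).sub_const (Φ a)
  refine image_norm_le_of_norm_deriv_right_le_deriv_boundary'
    (fun x hx => (hu_sub x hx).continuousAt.continuousWithinAt)
    (fun x hx => (hu_sub x (Ico_subset_Icc_self hx)).hasDerivWithinAt)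
    (by simp) (fun x hx => (hΦ_sub x hx).continuousAt.continuousWithinAt)
    (fun x hx => (hΦ_sub x (Ico_subset_Icc_self hx)).hasDerivWithinAt) hbound
    (right_mem_Icc.mpr hab)

theorem le_mul_exp_of_abs_deriv_le_mul {ρ ρ' : ℝ → ℝ} {ε a b : ℝ} (hab : a ≤ b)
    (hρ : ∀ x ∈ Icc a b, HasDerivAt ρ (ρ' x) x) (hpos : ∀ x ∈ Icc a b, 0 < ρ x)
    (hbound : ∀ x ∈ Icc a b, |ρ' x| ≤ ε * ρ x) : ρ b ≤ ρ a * exp (ε * (b - a)) := by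
  have hlog := abs_sub_le_sub_of_abs_deriv_le_s5 (u := fun x => log (ρ x)) (Φ := fun x => ε * x) hab
    (fun x hx => (hρ x hx).log (hpos x hx).ne') (fun x _ => (hasDerivAt_id x).const_mul ε)
    (fun x hx => by
      have hx' := Ico_subset_Icc_self hx
      rw [abs_div, abs_of_pos (hpos x hx'), mul_one, div_le_iff₀ (hpos x hx')]
      exact hbound x hx')
  have hρa := hpos a (left_mem_Icc.mpr hab)
  have hρb := hpos b (right_mem_Icc.mpr hab)
  calc ρ b = exp (log (ρ b)) := (exp_log hρb).symm
    _ ≤ exp (log (ρ a) + ε * (b - a)) := exp_le_exp.mpr (by linarith [(abs_le.mp hlog).2])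
    _ = ρ a * exp (ε * (b - a)) := by rw [exp_add, exp_log hρa]

theorem Filter.Tendsto.eventually_abs_le_mul_of_div {ρ ρ' : ℝ → ℝ}
    (hρ'o : Tendsto (fun τ => ρ' τ / ρ τ) atBot (𝓝 0)) (hpos : ∀ᶠ τ in atBot, 0 < ρ τ)
    {ε : ℝ} (hε : 0 < ε) : ∀ᶠ τ in atBot, |ρ' τ| ≤ ε * ρ τ := by
  filter_upwards [Metric.tendsto_nhds.mp hρ'o ε hε, hpos] with τ hτ hρτ
  rw [Real.dist_eq, sub_zero, abs_div, abs_of_pos hρτ, div_lt_iff₀ hρτ] at hτ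
  exact hτ.le

theorem hasDerivAt_exp_neg_mul_mul {f : ℝ → ℝ} {f' x : ℝ} (c : ℝ) (hf : HasDerivAt f f' x) :
    HasDerivAt (fun s => exp (-(c * s)) * f s) (exp (-(c * x)) * (f' - c * f x)) x :=
  (((hasDerivAt_id' x).const_mul c).fun_neg.exp.fun_mul hf).congr_deriv (by ring)

namespace PerturbedLinearODE

variable {f ρ f' ρ' : ℝ → ℝ} {lam ε C T : ℝ}

theorem abs_le_mul_of_neg (hf : ∀ s ≤ T, HasDerivAt f (f' s) s)
    (hρ : ∀ s ≤ T, HasDerivAt ρ (ρ' s) s) (hρpos : ∀ s ≤ T, 0 < ρ s)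
    (hρ' : ∀ s ≤ T, |ρ' s| ≤ ε * ρ s) (hC : 0 ≤ C) (hg : ∀ s ≤ T, |f' s - lam * f s| ≤ C * ρ s)
    (hlam : lam < 0) (hε : ε < -lam) (hf0 : Tendsto f atBot (𝓝 0)) :
    ∀ τ ≤ T, |f τ| ≤ C / (-lam - ε) * ρ τ := by
  set K := C / (-lam - ε)
  have hK : 0 ≤ K := div_nonneg hC (by linarith)
  intro b hbT
  have step : ∀ a ≤ b, |f b| ≤ |f a| + K * ρ b := by
    intro a hab
    have hcmp := abs_sub_le_sub_of_abs_deriv_le_s5 (u := fun s => exp (-(lam * s)) * f s)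
      (Φ := fun s => exp (-(lam * s)) * (K * ρ s)) hab
      (fun s hs => hasDerivAt_exp_neg_mul_mul lam (hf s (hs.2.trans hbT)))
      (fun s hs => hasDerivAt_exp_neg_mul_mul lam ((hρ s (hs.2.trans hbT)).const_mul K))
      (fun s hs => by
        have hsT : s ≤ T := hs.2.le.trans hbT
        have hweight : C * ρ s ≤ K * ρ' s - lam * (K * ρ s) :=
          calc C * ρ s = K * (-(ε * ρ s)) - lam * (K * ρ s) := by
                rw [← div_mul_cancel₀ C (by linarith : -lam - ε ≠ 0)]; ring
            _ ≤ K * ρ' s - lam * (K * ρ s) := by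
                gcongr; exact (abs_le.mp (hρ' s hsT)).1
        rw [abs_mul, abs_of_pos (exp_pos _)]
        exact mul_le_mul_of_nonneg_left ((hg s hsT).trans hweight) (exp_pos _).le)
    have hΦa : 0 ≤ exp (-(lam * a)) * (K * ρ a) :=
      mul_nonneg (exp_pos _).le (mul_nonneg hK (hρpos a (hab.trans hbT)).le)
    have hexp : exp (-(lam * a)) ≤ exp (-(lam * b)) := exp_le_exp.mpr (by nlinarith)
    have hu := abs_sub_abs_le_abs_sub (exp (-(lam * b)) * f b) (exp (-(lam * a)) * f a)
    rw [abs_mul, abs_mul, abs_of_pos (exp_pos _), abs_of_pos (exp_pos _)] at hu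
    have : exp (-(lam * b)) * |f b| ≤ exp (-(lam * b)) * (|f a| + K * ρ b) := by
      nlinarith [mul_le_mul_of_nonneg_right hexp (abs_nonneg (f a))]
    exact le_of_mul_le_mul_left this (exp_pos _)
  have hlim : Tendsto (fun a => |f a| + K * ρ b) atBot (𝓝 (K * ρ b)) := by
    simpa using hf0.abs.add_const (K * ρ b)
  exact ge_of_tendsto hlim ((eventually_le_atBot b).mono step)

theorem antitoneOn_exp_neg_mul_mul (hρ : ∀ s ≤ T, HasDerivAt ρ (ρ' s) s)
    (hρpos : ∀ s ≤ T, 0 < ρ s) (hρ' : ∀ s ≤ T, |ρ' s| ≤ ε * ρ s) (hε : ε ≤ lam) :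
    AntitoneOn (fun s => exp (-(lam * s)) * ρ s) (Iic T) := by
  intro τ _ σ hσ hτσ
  have hρτ := hρpos τ (hτσ.trans hσ)
  calc exp (-(lam * σ)) * ρ σ
      ≤ exp (-(lam * σ)) * (ρ τ * exp (ε * (σ - τ))) := by
        gcongr
        exact le_mul_exp_of_abs_deriv_le_mul hτσ (fun s hs => hρ s (hs.2.trans hσ))
          (fun s hs => hρpos s (hs.2.trans hσ)) (fun s hs => hρ' s (hs.2.trans hσ))
    _ = exp (-(lam * σ) + ε * (σ - τ)) * ρ τ := by rw [exp_add]; ring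
    _ ≤ exp (-(lam * τ)) * ρ τ := by gcongr; nlinarith [sub_nonneg.mpr hτσ]

theorem abs_le_mul_of_pos (hf : ∀ s ≤ T, HasDerivAt f (f' s) s)
    (hρ : ∀ s ≤ T, HasDerivAt ρ (ρ' s) s) (hρpos : ∀ s ≤ T, 0 < ρ s)
    (hρ' : ∀ s ≤ T, |ρ' s| ≤ ε * ρ s) (hC : 0 ≤ C) (hg : ∀ s ≤ T, |f' s - lam * f s| ≤ C * ρ s)
    (hε : ε < lam) :
    ∀ τ ≤ T, |f τ| ≤ (|f T| / ρ T + C / (lam - ε)) * ρ τ := by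
  set K := C / (lam - ε)
  have hK : 0 ≤ K := div_nonneg hC (by linarith)
  intro τ hτT
  have hcmp := abs_sub_le_sub_of_abs_deriv_le_s5 (u := fun s => exp (-(lam * s)) * f s)
    (Φ := fun s => -(exp (-(lam * s)) * (K * ρ s))) hτT
    (fun s hs => hasDerivAt_exp_neg_mul_mul lam (hf s hs.2))
    (fun s hs => (hasDerivAt_exp_neg_mul_mul lam ((hρ s hs.2).const_mul K)).neg)
    (fun s hs => by
      have hsT : s ≤ T := hs.2.le
      have hweight : C * ρ s ≤ -(K * ρ' s - lam * (K * ρ s)) :=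
        calc C * ρ s = -(K * (ε * ρ s) - lam * (K * ρ s)) := by
              rw [← div_mul_cancel₀ C (by linarith : lam - ε ≠ 0)]; ring
          _ ≤ -(K * ρ' s - lam * (K * ρ s)) := by
              gcongr; exact (abs_le.mp (hρ' s hsT)).2
      have := mul_le_mul_of_nonneg_left ((hg s hsT).trans hweight) (exp_pos (-(lam * s))).le
      rw [abs_mul, abs_of_pos (exp_pos _)]
      linarith)
  have hρT := hρpos T le_rfl
  have hweight_anti : exp (-(lam * T)) * ρ T ≤ exp (-(lam * τ)) * ρ τ :=
    antitoneOn_exp_neg_mul_mul hρ hρpos hρ' hε.le hτT self_mem_Iic hτT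
  have hhom : exp (-(lam * T)) * |f T| ≤ exp (-(lam * τ)) * (|f T| / ρ T * ρ τ) := by
    calc exp (-(lam * T)) * |f T| = |f T| / ρ T * (exp (-(lam * T)) * ρ T) := by
          field_simp
      _ ≤ |f T| / ρ T * (exp (-(lam * τ)) * ρ τ) := by gcongr
      _ = exp (-(lam * τ)) * (|f T| / ρ T * ρ τ) := by ring
  have hu := abs_sub_abs_le_abs_sub (exp (-(lam * τ)) * f τ) (exp (-(lam * T)) * f T)
  rw [abs_sub_comm, abs_mul, abs_mul, abs_of_pos (exp_pos _), abs_of_pos (exp_pos _)] at hu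
  have hΦT : 0 ≤ exp (-(lam * T)) * (K * ρ T) := by positivity
  refine le_of_mul_le_mul_left ?_ (exp_pos (-(lam * τ)))
  linarith

end PerturbedLinearODE

open PerturbedLinearODE in
theorem stmt5_general (f ρ f' ρ' : ℝ → ℝ) (lam : ℝ) (hlam : lam ≠ 0)
    (hρpos : ∀ τ ≤ (0:ℝ), 0 < ρ τ)
    (hf : ∀ τ ≤ (0:ℝ), HasDerivAt f (f' τ) τ)
    (hρ : ∀ τ ≤ (0:ℝ), HasDerivAt ρ (ρ' τ) τ)
    (hf0 : Tendsto f atBot (nhds 0))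
    (hO : ∃ C : ℝ, ∀ᶠ τ in atBot, |f' τ - lam * f τ| ≤ C * ρ τ)
    (hρ'o : Tendsto (fun τ => ρ' τ / ρ τ) atBot (nhds 0)) :
    (∃ δ > (0:ℝ), ∃ C > (0:ℝ), ∀ᶠ τ in atBot, ρ τ ≤ C * Real.exp (δ * τ)) ∨
      (∃ C > (0:ℝ), ∀ᶠ τ in atBot, |f τ| ≤ C * ρ τ) := by
  right
  obtain ⟨C, hC⟩ := hO
  set ε := |lam| / 2 with hε_def
  have hρ' := hρ'o.eventually_abs_le_mul_of_div
    (eventually_atBot.mpr ⟨0, hρpos⟩) (by positivity : 0 < ε)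
  obtain ⟨T, hT⟩ := eventually_atBot.mp ((hρ'.and hC).and (eventually_le_atBot (0:ℝ)))
  have hT0 : T ≤ 0 := (hT T le_rfl).2
  have hρpos' : ∀ s ≤ T, 0 < ρ s := fun s hs => hρpos s (hs.trans hT0)
  have hg : ∀ s ≤ T, |f' s - lam * f s| ≤ max C 1 * ρ s := fun s hs =>
    (hT s hs).1.2.trans (by gcongr; exacts [(hρpos' s hs).le, le_max_left _ _])
  have hf' : ∀ s ≤ T, HasDerivAt f (f' s) s := fun s hs => hf s (hs.trans hT0)
  have hρd : ∀ s ≤ T, HasDerivAt ρ (ρ' s) s := fun s hs => hρ s (hs.trans hT0)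
  have hρ'T : ∀ s ≤ T, |ρ' s| ≤ ε * ρ s := fun s hs => (hT s hs).1.1
  have hC1 : (0:ℝ) < max C 1 := lt_max_of_lt_right one_pos
  rcases hlam.lt_or_gt with hneg | hpos
  · have hεlam : ε < -lam := by linarith [abs_of_neg hneg]
    exact ⟨max C 1 / (-lam - ε), div_pos hC1 (by linarith), eventually_atBot.mpr
      ⟨T, abs_le_mul_of_neg hf' hρd hρpos' hρ'T hC1.le hg hneg hεlam hf0⟩⟩
  · have hεlam : ε < lam := by linarith [abs_of_pos hpos]
    have hfT : 0 ≤ |f T| / ρ T := div_nonneg (abs_nonneg _) (hρpos' T le_rfl).le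
    exact ⟨|f T| / ρ T + max C 1 / (lam - ε),
      add_pos_of_nonneg_of_pos hfT (div_pos hC1 (by linarith)),
      eventually_atBot.mpr ⟨T, abs_le_mul_of_pos hf' hρd hρpos' hρ'T hC1.le hg hεlam⟩⟩

/-- ODE lemma (`lem:ode-decayinf`): if `f' = λ f + O(ρ)` and `ρ' = o(ρ)` with `ρ > 0`,
both `f` and `ρ` tending to `0` at `-∞`, and `λ ≠ 0`, then either `ρ ≲ e^{δτ}` for some
`δ > 0`, or `|f| ≲ ρ` for `τ` negative enough. -/
theorem stmt5 (f ρ f' ρ' : ℝ → ℝ) (lam : ℝ) (hlam : lam ≠ 0)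
    (hρpos : ∀ τ ≤ (0:ℝ), 0 < ρ τ)
    (hf : ∀ τ ≤ (0:ℝ), HasDerivAt f (f' τ) τ)
    (hρ : ∀ τ ≤ (0:ℝ), HasDerivAt ρ (ρ' τ) τ)
    (hf'c : ContinuousOn f' (Iic 0)) (hρ'c : ContinuousOn ρ' (Iic 0))
    (hf0 : Tendsto f atBot (nhds 0)) (hρ0 : Tendsto ρ atBot (nhds 0))
    (hO : ∃ C : ℝ, ∀ᶠ τ in atBot, |f' τ - lam * f τ| ≤ C * ρ τ)
    (hρ'o : Tendsto (fun τ => ρ' τ / ρ τ) atBot (nhds 0)) :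
    (∃ δ > (0:ℝ), ∃ C > (0:ℝ), ∀ᶠ τ in atBot, ρ τ ≤ C * Real.exp (δ * τ)) ∨
      (∃ C > (0:ℝ), ∀ᶠ τ in atBot, |f τ| ≤ C * ρ τ) :=
  stmt5_general f ρ f' ρ' lam hlam hρpos hf hρ hf0 hO hρ'o
end

section
/- Suppose f and ρ > 0 are C¹ functions on (-∞,0] with f(τ) → 0 and ρ(τ) → 0 as τ → -∞, satisfying ∂_τ f = λ f - μ ρ + O(ρ²) and ∂_τ ρ = O(ρ²), where λ ≠ 0 and μ are constants. Then either ρ(τ) ≲ e^{δτ} for some δ > 0 and τ negative enough, or f = λ^{-1} μ ρ + O(ρ²) as τ → -∞. -/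
/-!
With `g = f - λ⁻¹ μ ρ` the equation becomes `g' = λ g + O(ρ²)`. Since `ρ' = O(ρ²)` and `ρ → 0`,
`log ρ` is `|λ|/4`-Lipschitz near `-∞`, so `ρ(s)² ≤ ρ(τ)² e^{λ(s-τ)/2}` whenever `λ(s-τ) ≥ 0`.
Integrating `(e^{-λs} g)' = e^{-λs} (g' - λ g)` from `-∞` to `τ` if `λ < 0` (where `g → 0`), or
from `τ` to a fixed `T` if `λ > 0`, the forcing then contributes at most `2C ρ(τ)² / |λ|`, and the
boundary term at `T` is `O(ρ(τ)²)` by the same estimate. So the second alternative always holds.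
-/

open Real Set Filter Topology

theorem abs_sub_le_sub_of_abs_deriv_le_s6 {G G' H H' : ℝ → ℝ} {a b : ℝ} (hab : a ≤ b)
    (hG : ∀ s ∈ Icc a b, HasDerivAt G (G' s) s) (hH : ∀ s, HasDerivAt H (H' s) s)
    (hbound : ∀ s ∈ Icc a b, |G' s| ≤ H' s) :
    |G b - G a| ≤ H b - H a := by
  have := image_norm_le_of_norm_deriv_right_le_deriv_boundary (f := fun s => G s - G a)
    (B := fun s => H s - H a) (fun s hs => ((hG s hs).sub_const _).continuousAt.continuousWithinAt)
    (fun s hs => ((hG s (Ico_subset_Icc_self hs)).sub_const _).hasDerivWithinAt)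
    (by simp) (fun s => (hH s).sub_const _) (fun s hs => hbound s (Ico_subset_Icc_self hs))
    (right_mem_Icc.2 hab)
  simpa using this

theorem le_mul_exp_of_abs_deriv_le_mul_s6 {ρ ρ' : ℝ → ℝ} {T L : ℝ}
    (hpos : ∀ s ≤ T, 0 < ρ s) (hρ : ∀ s ≤ T, HasDerivAt ρ (ρ' s) s)
    (hL : ∀ s ≤ T, |ρ' s| ≤ L * ρ s) {s t : ℝ} (hs : s ≤ T) (ht : t ≤ T) :
    ρ s ≤ ρ t * exp (L * |s - t|) := by
  have hlog : |log (ρ s) - log (ρ t)| ≤ L * |s - t| :=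
    (convex_Iic T).norm_image_sub_le_of_norm_hasDerivWithin_le
      (fun x hx => ((hρ x hx).log (hpos x hx).ne').hasDerivWithinAt)
      (fun x hx => by
        rw [Real.norm_eq_abs, abs_div, abs_of_pos (hpos x hx), div_le_iff₀ (hpos x hx)]
        exact hL x hx) ht hs
  calc ρ s = exp (log (ρ s)) := (exp_log (hpos s hs)).symm
    _ ≤ exp (log (ρ t) + L * |s - t|) :=
        exp_le_exp.2 (by linarith [le_abs_self (log (ρ s) - log (ρ t))])
    _ = ρ t * exp (L * |s - t|) := by rw [exp_add, exp_log (hpos t ht)]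

theorem abs_exp_mul_sub_exp_mul_le {g g' : ℝ → ℝ} {lam M a b τ : ℝ} (hlam : lam ≠ 0) (hab : a ≤ b)
    (hg : ∀ s ∈ Icc a b, HasDerivAt g (g' s) s)
    (hM : ∀ s ∈ Icc a b, |g' s - lam * g s| ≤ M * exp (lam * (s - τ) / 2)) :
    |exp (-lam * (b - τ)) * g b - exp (-lam * (a - τ)) * g a| ≤
      2 * M / lam * (exp (-lam * (a - τ) / 2) - exp (-lam * (b - τ) / 2)) := by
  have hw : ∀ s, HasDerivAt (fun s => exp (-lam * (s - τ))) (exp (-lam * (s - τ)) * -lam) s := by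
    intro s
    simpa using ((hasDerivAt_id s).sub_const τ |>.const_mul (-lam)).exp
  have hH : ∀ s, HasDerivAt (fun s => -(2 * M / lam) * exp (-lam * (s - τ) / 2))
      (M * exp (-lam * (s - τ) / 2)) s := by
    intro s
    exact ((((hasDerivAt_id s).sub_const τ).const_mul (-lam)).div_const 2).exp.const_mul
      (-(2 * M / lam)) |>.congr_deriv (by field_simp; rfl)
  -- compare `e^{-λ(s-τ)} g(s)` with the primitive `-(2M/λ) e^{-λ(s-τ)/2}` of its derivative bound
  have := abs_sub_le_sub_of_abs_deriv_le_s6 (G := fun s => exp (-lam * (s - τ)) * g s) hab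
    (fun s hs => (hw s).mul (hg s hs)) hH ?_
  · convert this using 1; ring
  intro s hs
  calc |exp (-lam * (s - τ)) * -lam * g s + exp (-lam * (s - τ)) * g' s|
      = exp (-lam * (s - τ)) * |g' s - lam * g s| := by
        rw [← abs_of_pos (exp_pos (-lam * (s - τ))), ← abs_mul, abs_of_pos (exp_pos _)]
        ring_nf
    _ ≤ exp (-lam * (s - τ)) * (M * exp (lam * (s - τ) / 2)) := by gcongr; exact hM s hs
    _ = M * exp (-lam * (s - τ) / 2) := by
        rw [mul_left_comm, ← exp_add]; ring_nf

theorem abs_le_of_abs_deriv_sub_le_of_neg {g g' : ℝ → ℝ} {lam M τ : ℝ} (hlam : lam < 0)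
    (hg : ∀ s ≤ τ, HasDerivAt g (g' s) s)
    (hM : ∀ s ≤ τ, |g' s - lam * g s| ≤ M * exp (lam * (s - τ) / 2))
    (hg0 : Tendsto g atBot (𝓝 0)) :
    |g τ| ≤ -(2 * M / lam) := by
  have hM0 : 0 ≤ M := by simpa using (abs_nonneg _).trans (hM τ le_rfl)
  have hbound : ∀ a ≤ τ, |g τ| ≤ exp (-lam * (a - τ)) * |g a| + -(2 * M / lam) := by
    intro a ha
    have h := abs_exp_mul_sub_exp_mul_le hlam.ne ha (fun s hs => hg s hs.2) (fun s hs => hM s hs.2)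
    simp only [sub_self, mul_zero, zero_div, exp_zero, one_mul] at h
    have hfac : 2 * M / lam * (exp (-lam * (a - τ) / 2) - 1) ≤ -(2 * M / lam) := by
      have : 2 * M / lam ≤ 0 := div_nonpos_of_nonneg_of_nonpos (by linarith) hlam.le
      nlinarith [exp_pos (-lam * (a - τ) / 2)]
    have htri := abs_sub_abs_le_abs_sub (g τ) (exp (-lam * (a - τ)) * g a)
    rw [abs_mul, abs_of_pos (exp_pos _)] at htri
    linarith
  have hweight : Tendsto (fun a => exp (-lam * (a - τ))) atBot (𝓝 0) :=
    tendsto_exp_atBot.comp <| (tendsto_atBot_add_const_right _ (-τ) tendsto_id).const_mul_atBot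
      (neg_pos.2 hlam) |>.congr fun a => by simp [sub_eq_add_neg]
  have hlim := (hweight.mul hg0.abs).add_const (-(2 * M / lam))
  simp only [abs_zero, mul_zero, zero_add] at hlim
  exact ge_of_tendsto hlim (eventually_atBot.2 ⟨τ, hbound⟩)

theorem abs_le_of_abs_deriv_sub_le_of_pos {g g' : ℝ → ℝ} {lam M τ b : ℝ} (hlam : 0 < lam)
    (hτb : τ ≤ b) (hg : ∀ s ∈ Icc τ b, HasDerivAt g (g' s) s)
    (hM : ∀ s ∈ Icc τ b, |g' s - lam * g s| ≤ M * exp (lam * (s - τ) / 2)) :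
    |g τ| ≤ exp (-lam * (b - τ)) * |g b| + 2 * M / lam := by
  have hM0 : 0 ≤ M := by simpa using (abs_nonneg _).trans (hM τ ⟨le_rfl, hτb⟩)
  have h := abs_exp_mul_sub_exp_mul_le hlam.ne' hτb hg hM
  simp only [sub_self, mul_zero, zero_div, exp_zero, one_mul] at h
  have hfac : 2 * M / lam * (1 - exp (-lam * (b - τ) / 2)) ≤ 2 * M / lam := by
    have : 0 ≤ 2 * M / lam := by positivity
    nlinarith [exp_pos (-lam * (b - τ) / 2)]
  have htri := abs_sub_abs_le_abs_sub (g τ) (exp (-lam * (b - τ)) * g b)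
  rw [abs_mul, abs_of_pos (exp_pos _), abs_sub_comm] at htri
  linarith

theorem sq_le_sq_mul_exp_of_abs_deriv_le {ρ ρ' : ℝ → ℝ} {lam T : ℝ}
    (hpos : ∀ s ≤ T, 0 < ρ s) (hρ : ∀ s ≤ T, HasDerivAt ρ (ρ' s) s)
    (hρ' : ∀ s ≤ T, |ρ' s| ≤ |lam| / 4 * ρ s) {s τ : ℝ} (hs : s ≤ T) (hτ : τ ≤ T)
    (hsτ : 0 ≤ lam * (s - τ)) :
    ρ s ^ 2 ≤ ρ τ ^ 2 * exp (lam * (s - τ) / 2) := by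
  have h := le_mul_exp_of_abs_deriv_le_mul_s6 hpos hρ hρ' hs hτ
  rw [div_mul_eq_mul_div, ← abs_mul, abs_of_nonneg hsτ] at h
  calc ρ s ^ 2 ≤ (ρ τ * exp (lam * (s - τ) / 4)) ^ 2 := by gcongr; exact (hpos s hs).le
    _ = ρ τ ^ 2 * exp (lam * (s - τ) / 2) := by rw [mul_pow, ← exp_nat_mul]; ring_nf

theorem exists_abs_le_mul_sq {g g' ρ ρ' : ℝ → ℝ} {lam C T : ℝ} (hlam : lam ≠ 0)
    (hρpos : ∀ s ≤ T, 0 < ρ s) (hρ : ∀ s ≤ T, HasDerivAt ρ (ρ' s) s)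
    (hρ' : ∀ s ≤ T, |ρ' s| ≤ |lam| / 4 * ρ s) (hg : ∀ s ≤ T, HasDerivAt g (g' s) s)
    (hgρ : ∀ s ≤ T, |g' s - lam * g s| ≤ C * ρ s ^ 2) (hg0 : Tendsto g atBot (𝓝 0)) :
    ∃ K, ∀ τ ≤ T, |g τ| ≤ K * ρ τ ^ 2 := by
  have hC : 0 ≤ C :=
    nonneg_of_mul_nonneg_left ((abs_nonneg _).trans (hgρ T le_rfl)) (pow_pos (hρpos T le_rfl) 2)
  have hforce : ∀ τ ≤ T, ∀ s ≤ T, 0 ≤ lam * (s - τ) →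
      |g' s - lam * g s| ≤ C * ρ τ ^ 2 * exp (lam * (s - τ) / 2) := fun τ hτ s hs hsτ =>
    (hgρ s hs).trans <| by
      rw [mul_assoc]
      exact mul_le_mul_of_nonneg_left (sq_le_sq_mul_exp_of_abs_deriv_le hρpos hρ hρ' hs hτ hsτ) hC
  rcases hlam.lt_or_gt with hneg | hpos
  · refine ⟨-(2 * C / lam), fun τ hτ => ?_⟩
    have h := abs_le_of_abs_deriv_sub_le_of_neg hneg (fun s hs => hg s (hs.trans hτ))
      (fun s hs => hforce τ hτ s (hs.trans hτ) (mul_nonneg_of_nonpos_of_nonpos hneg.le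
        (sub_nonpos.2 hs))) hg0
    exact h.trans_eq (by ring)
  · refine ⟨|g T| / ρ T ^ 2 + 2 * C / lam, fun τ hτ => ?_⟩
    have h := abs_le_of_abs_deriv_sub_le_of_pos hpos hτ (fun s hs => hg s hs.2)
      (fun s hs => hforce τ hτ s hs.2 (mul_nonneg hpos.le (sub_nonneg.2 hs.1)))
    have hTτ : 0 ≤ lam * (T - τ) := mul_nonneg hpos.le (sub_nonneg.2 hτ)
    have hdecay : exp (-lam * (T - τ)) * ρ T ^ 2 ≤ ρ τ ^ 2 :=
      calc exp (-lam * (T - τ)) * ρ T ^ 2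
          ≤ exp (-lam * (T - τ)) * (ρ τ ^ 2 * exp (lam * (T - τ) / 2)) := by
            gcongr; exact sq_le_sq_mul_exp_of_abs_deriv_le hρpos hρ hρ' le_rfl hτ hTτ
        _ = ρ τ ^ 2 * exp (-(lam * (T - τ) / 2)) := by
            rw [mul_left_comm, ← exp_add]; ring_nf
        _ ≤ ρ τ ^ 2 := mul_le_of_le_one_right (sq_nonneg _) (exp_le_one_iff.2 (by linarith))
    have hboundary : exp (-lam * (T - τ)) * |g T| ≤ |g T| / ρ T ^ 2 * ρ τ ^ 2 := by
      rw [div_mul_eq_mul_div, le_div_iff₀ (pow_pos (hρpos T le_rfl) 2)]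
      nlinarith [mul_le_mul_of_nonneg_left hdecay (abs_nonneg (g T))]
    calc |g τ| ≤ exp (-lam * (T - τ)) * |g T| + 2 * (C * ρ τ ^ 2) / lam := h
      _ ≤ |g T| / ρ T ^ 2 * ρ τ ^ 2 + 2 * (C * ρ τ ^ 2) / lam := by gcongr
      _ = (|g T| / ρ T ^ 2 + 2 * C / lam) * ρ τ ^ 2 := by ring

theorem eventually_abs_le_mul_of_abs_le_mul_sq {α : Type*} {l : Filter α} {ρ ρ' : α → ℝ}
    {C L : ℝ} (hL : 0 < L) (hρ0 : Tendsto ρ l (𝓝 0)) (hnonneg : ∀ᶠ x in l, 0 ≤ ρ x)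
    (hρ' : ∀ᶠ x in l, |ρ' x| ≤ C * ρ x ^ 2) :
    ∀ᶠ x in l, |ρ' x| ≤ L * ρ x := by
  have hsmall : ∀ᶠ x in l, C * ρ x < L :=
    (hρ0.const_mul C).eventually_lt_const (by simpa using hL)
  filter_upwards [hnonneg, hρ', hsmall] with x hx hx' hxL
  nlinarith

theorem eventually_abs_deriv_sub_le {α : Type*} {l : Filter α} {f f' ρ ρ' : α → ℝ}
    {lam μ C₀ C₁ : ℝ} (hlam : lam ≠ 0)
    (hf : ∀ᶠ x in l, |f' x - (lam * f x - μ * ρ x)| ≤ C₀ * ρ x ^ 2)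
    (hρ : ∀ᶠ x in l, |ρ' x| ≤ C₁ * ρ x ^ 2) :
    ∀ᶠ x in l, |(f' x - lam⁻¹ * μ * ρ' x) - lam * (f x - lam⁻¹ * μ * ρ x)| ≤
      (C₀ + |lam⁻¹ * μ| * C₁) * ρ x ^ 2 := by
  filter_upwards [hf, hρ] with x hfx hρx
  have hsplit : (f' x - lam⁻¹ * μ * ρ' x) - lam * (f x - lam⁻¹ * μ * ρ x) =
      (f' x - (lam * f x - μ * ρ x)) - lam⁻¹ * μ * ρ' x := by
    field_simp
    ring
  calc _ ≤ |f' x - (lam * f x - μ * ρ x)| + |lam⁻¹ * μ| * |ρ' x| := by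
        rw [hsplit, ← abs_mul]; exact abs_sub _ _
    _ ≤ C₀ * ρ x ^ 2 + |lam⁻¹ * μ| * (C₁ * ρ x ^ 2) := by gcongr
    _ = (C₀ + |lam⁻¹ * μ| * C₁) * ρ x ^ 2 := by ring

theorem stmt6_general (f ρ f' ρ' : ℝ → ℝ) (lam μ : ℝ) (hlam : lam ≠ 0)
    (hρpos : ∀ τ ≤ (0:ℝ), 0 < ρ τ)
    (hf : ∀ τ ≤ (0:ℝ), HasDerivAt f (f' τ) τ)
    (hρ : ∀ τ ≤ (0:ℝ), HasDerivAt ρ (ρ' τ) τ)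
    (hf0 : Tendsto f atBot (nhds 0)) (hρ0 : Tendsto ρ atBot (nhds 0))
    (hO : ∃ C : ℝ, ∀ᶠ τ in atBot, |f' τ - (lam * f τ - μ * ρ τ)| ≤ C * (ρ τ)^2)
    (hρO : ∃ C : ℝ, ∀ᶠ τ in atBot, |ρ' τ| ≤ C * (ρ τ)^2) :
    (∃ δ > (0:ℝ), ∃ C > (0:ℝ), ∀ᶠ τ in atBot, ρ τ ≤ C * Real.exp (δ * τ)) ∨
      (∃ C > (0:ℝ), ∀ᶠ τ in atBot, |f τ - lam⁻¹ * μ * ρ τ| ≤ C * (ρ τ)^2) := by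
  right
  obtain ⟨C₀, hC₀⟩ := hO
  obtain ⟨C₁, hC₁⟩ := hρO
  have hρ' : ∀ᶠ τ in atBot, |ρ' τ| ≤ |lam| / 4 * ρ τ :=
    eventually_abs_le_mul_of_abs_le_mul_sq (by positivity) hρ0
      (eventually_atBot.2 ⟨0, fun τ hτ => (hρpos τ hτ).le⟩) hC₁
  obtain ⟨T, hT⟩ := eventually_atBot.1 <|
    (eventually_le_atBot 0).and ((eventually_abs_deriv_sub_le hlam hC₀ hC₁).and hρ')
  obtain ⟨K, hK⟩ := exists_abs_le_mul_sq (g := fun τ => f τ - lam⁻¹ * μ * ρ τ) hlam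
    (fun s hs => hρpos s (hT s hs).1) (fun s hs => hρ s (hT s hs).1) (fun s hs => (hT s hs).2.2)
    (fun s hs => (hf s (hT s hs).1).sub ((hρ s (hT s hs).1).const_mul (lam⁻¹ * μ)))
    (fun s hs => (hT s hs).2.1) (by simpa using hf0.sub (hρ0.const_mul (lam⁻¹ * μ)))
  refine ⟨max K 1, by positivity, eventually_atBot.2 ⟨T, fun τ hτ => (hK τ hτ).trans ?_⟩⟩
  gcongr
  exact le_max_left _ _

/-- ODE lemma (`lem:frho-2nd`): if `f' = λ f - μ ρ + O(ρ²)` and `ρ' = O(ρ²)` with `ρ > 0`,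
both `f` and `ρ` tending to `0` at `-∞`, and `λ ≠ 0`, then either `ρ ≲ e^{δτ}` for some
`δ > 0` and `τ` negative enough, or `f = λ⁻¹ μ ρ + O(ρ²)` as `τ → -∞`. -/
theorem stmt6 (f ρ f' ρ' : ℝ → ℝ) (lam μ : ℝ) (hlam : lam ≠ 0)
    (hρpos : ∀ τ ≤ (0:ℝ), 0 < ρ τ)
    (hf : ∀ τ ≤ (0:ℝ), HasDerivAt f (f' τ) τ)
    (hρ : ∀ τ ≤ (0:ℝ), HasDerivAt ρ (ρ' τ) τ)
    (hf'c : ContinuousOn f' (Iic 0)) (hρ'c : ContinuousOn ρ' (Iic 0))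
    (hf0 : Tendsto f atBot (nhds 0)) (hρ0 : Tendsto ρ atBot (nhds 0))
    (hO : ∃ C : ℝ, ∀ᶠ τ in atBot, |f' τ - (lam * f τ - μ * ρ τ)| ≤ C * (ρ τ)^2)
    (hρO : ∃ C : ℝ, ∀ᶠ τ in atBot, |ρ' τ| ≤ C * (ρ τ)^2) :
    (∃ δ > (0:ℝ), ∃ C > (0:ℝ), ∀ᶠ τ in atBot, ρ τ ≤ C * Real.exp (δ * τ)) ∨
      (∃ C > (0:ℝ), ∀ᶠ τ in atBot, |f τ - lam⁻¹ * μ * ρ τ| ≤ C * (ρ τ)^2) :=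
  stmt6_general f ρ f' ρ' lam μ hlam hρpos hf hρ hf0 hρ0 hO hρO
end

section
/- Let α ∈ (0,1), and let U > 0 solve U'' + U = U^{-1/α} on [0,Θ] with U'(0) = U'(Θ) = 0, and let C be the constant value of U'² + U² + (2α/(1-α)) U^{1-1/α}. Then C - ((1+α)/(1-α)) · (1/Θ)∫_0^Θ U^{1-1/α} dθ = (2/Θ) ∫_0^Θ (U')² dθ ≥ 0. -/
open Real Set MeasureTheory

/-!
Since `(U U')' = U'² + U U''`, the Neumann conditions give `∫₀^Θ (U'² + U U'') = 0`. Substituting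
`U U'' = U^{1-1/α} - U²` and eliminating `U²` with the first integral turns the integrand into
`2 U'² + ((1+α)/(1-α)) U^{1-1/α} - C`.
-/

theorem intervalIntegral.integral_deriv_sq_add_mul_deriv_eq_zero_of_neumann
    {a b : ℝ} {u u' u'' : ℝ → ℝ}
    (hu : ∀ x ∈ uIcc a b, HasDerivAt u (u' x) x) (hu' : ∀ x ∈ uIcc a b, HasDerivAt u' (u'' x) x)
    (hu'' : IntervalIntegrable u'' volume a b) (ha : u' a = 0) (hb : u' b = 0) :
    ∫ x in a..b, (u' x ^ 2 + u x * u'' x) = 0 := by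
  have hu'_int : IntervalIntegrable u' volume a b :=
    ContinuousOn.intervalIntegrable fun x hx => (hu' x hx).continuousAt.continuousWithinAt
  simpa [sq, ha, hb] using intervalIntegral.integral_deriv_mul_eq_sub hu hu' hu'_int hu''

theorem Real.mul_rpow_neg_sub {x : ℝ} (hx : 0 < x) (p : ℝ) :
    x * (x ^ (-p) - x) = x ^ (1 - p) - x ^ 2 := by
  rw [mul_sub, sub_eq_add_neg (1 : ℝ), add_comm, rpow_add_one hx.ne', mul_comm, sq]

theorem shrinker_energy_eq {α x v C : ℝ} (hα : α ≠ 1) (hx : 0 < x)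
    (hC : v ^ 2 + x ^ 2 + (2 * α / (1 - α)) * x ^ (1 - 1 / α) = C) :
    v ^ 2 + x * (x ^ (-(1 / α)) - x) = 2 * v ^ 2 + (1 + α) / (1 - α) * x ^ (1 - 1 / α) - C := by
  have h1α : (1 : ℝ) - α ≠ 0 := sub_ne_zero.mpr hα.symm
  rw [mul_rpow_neg_sub hx, ← hC]
  field_simp
  ring

/-- With `U'' + U = U^{-1/α}` on `[0,Θ]`, Neumann conditions `U'(0) = U'(Θ) = 0`, and `C`
the first-integral constant of `U'² + U² + (2α/(1-α))U^{1-1/α}`: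
`C - ((1+α)/(1-α)) ⨍₀^Θ U^{1-1/α} = (2/Θ) ∫₀^Θ U'² ≥ 0`. -/
theorem stmt14 (α Θ C : ℝ) (hα : α ∈ Set.Ioo (0:ℝ) 1) (hΘ : 0 < Θ)
    (U U' : ℝ → ℝ)
    (hpos : ∀ θ ∈ Icc 0 Θ, 0 < U θ)
    (hU : ∀ θ ∈ Icc 0 Θ, HasDerivAt U (U' θ) θ)
    (hU'' : ∀ θ ∈ Icc 0 Θ, HasDerivAt U' ((U θ) ^ (-(1/α)) - U θ) θ)
    (hU'0 : U' 0 = 0) (hU'Θ : U' Θ = 0)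
    (hC : ∀ θ ∈ Icc 0 Θ,
      (U' θ)^2 + (U θ)^2 + (2*α/(1-α)) * (U θ) ^ (1 - 1/α) = C) :
    C - ((1+α)/(1-α)) * ((1/Θ) * ∫ θ in (0:ℝ)..Θ, (U θ) ^ (1 - 1/α))
        = (2/Θ) * ∫ θ in (0:ℝ)..Θ, (U' θ)^2 ∧
    0 ≤ (2/Θ) * ∫ θ in (0:ℝ)..Θ, (U' θ)^2 := by
  rw [← uIcc_of_le hΘ.le] at hpos hU hU'' hC
  have hUc : ContinuousOn U (uIcc 0 Θ) := fun θ hθ => (hU θ hθ).continuousAt.continuousWithinAt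
  have hU'c : ContinuousOn U' (uIcc 0 Θ) := fun θ hθ => (hU'' θ hθ).continuousAt.continuousWithinAt
  have hpowc : ∀ p : ℝ, ContinuousOn (fun θ => U θ ^ p) (uIcc 0 Θ) := fun p =>
    hUc.rpow_const fun θ hθ => Or.inl (hpos θ hθ).ne'
  have hneumann := intervalIntegral.integral_deriv_sq_add_mul_deriv_eq_zero_of_neumann hU hU''
    (((hpowc _).sub hUc).intervalIntegrable) hU'0 hU'Θ
  have hsq_int : IntervalIntegrable (fun θ => 2 * U' θ ^ 2) volume 0 Θ :=
    (hU'c.pow 2).intervalIntegrable.const_mul 2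
  have hpow_int : IntervalIntegrable (fun θ => (1+α)/(1-α) * U θ ^ (1 - 1/α)) volume 0 Θ :=
    (hpowc _).intervalIntegrable.const_mul _
  rw [intervalIntegral.integral_congr fun θ hθ =>
      shrinker_energy_eq hα.2.ne (hpos θ hθ) (hC θ hθ),
    intervalIntegral.integral_sub (hsq_int.add hpow_int) intervalIntegrable_const,
    intervalIntegral.integral_add hsq_int hpow_int, intervalIntegral.integral_const_mul,
    intervalIntegral.integral_const_mul, intervalIntegral.integral_const, sub_zero,
    smul_eq_mul] at hneumann
  refine ⟨?_, mul_nonneg (by positivity) <|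
    intervalIntegral.integral_nonneg hΘ.le fun θ _ => sq_nonneg _⟩
  generalize (1+α)/(1-α) = k at hneumann ⊢
  field_simp
  linear_combination -hneumann
end

section
/- Suppose ρ : (-∞,0] → [0,∞) is absolutely continuous, ρ(τ) → 0 as τ → -∞, and |∂_τ ρ| ≤ C ρ^{3/2} for some constant C > 0. If ρ(τ₀) > 0 for some τ₀, then ρ(τ) > 0 for all τ, and ρ(τ) ≥ c(1 + |τ|)^{-2} for all τ ≤ τ₀ and some constant c > 0; in particular ∫_{-∞}^0 √(ρ(τ)) dτ = +∞. -/
/-!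
Since `|(ρ^{-1/2})'| ≤ C/2`, the quantity `ρ^{-1/2}` grows at most linearly away from `τ₀`, so
`ρ τ ≥ (ρ(τ₀)^{-1/2} + C |τ - τ₀|)⁻²`; this is proved without dividing by `ρ` by comparing `ρ` with
that barrier, which it can never touch. Hence `ρ` decays at most like `|τ|⁻²`, and `√ρ` dominates
the reciprocal of an affine function, whose integral at `-∞` diverges logarithmically.
-/

open Real Set Filter Topology MeasureTheory

lemma inv_sq_rpow_three_halves {u : ℝ} (hu : 0 ≤ u) : ((u ^ 2)⁻¹) ^ ((3:ℝ)/2) = (u ^ 3)⁻¹ := by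
  rw [inv_rpow (by positivity), ← rpow_natCast, ← rpow_mul hu, ← rpow_natCast]
  norm_num

section ThreeHalvesComparison

variable {f f' : ℝ → ℝ} {C a b : ℝ}

/-- The barrier `(s + C (t - a))⁻²`, `s = f(a)^{-1/2}`, decreases at rate `2C(s + C(t - a))⁻³`,
strictly faster than `f` can whenever the two meet. -/
theorem inv_sq_le_of_neg_deriv_le_rpow (hC : 0 < C)
    (hd : ∀ t ∈ Icc a b, HasDerivAt f (f' t) t)
    (hf' : ∀ t ∈ Ico a b, -f' t ≤ C * f t ^ ((3:ℝ)/2))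
    (ha : 0 < f a) {t : ℝ} (ht : t ∈ Icc a b) :
    (((√(f a))⁻¹ + C * (t - a)) ^ 2)⁻¹ ≤ f t := by
  set s := (√(f a))⁻¹
  have hs : 0 < s := inv_pos.2 (sqrt_pos.2 ha)
  set u : ℝ → ℝ := fun t => s + C * (t - a)
  have hu : ∀ t, a ≤ t → 0 < u t := fun t ht =>
    add_pos_of_pos_of_nonneg hs (mul_nonneg hC.le (sub_nonneg.2 ht))
  have hu_deriv : ∀ t, HasDerivAt u C t := fun t => by
    simpa only [mul_one] using (((hasDerivAt_id' t).sub_const a).const_mul C).const_add s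
  have hB : ∀ t, 0 < u t → HasDerivAt (fun t => -(u t ^ 2)⁻¹) (2 * C * (u t ^ 3)⁻¹) t := by
    intro t ht
    refine (((hu_deriv t).pow 2).inv (pow_ne_zero 2 ht.ne')).neg.congr_deriv ?_
    simp only [Pi.pow_apply]
    field_simp
    ring
  suffices key : -f t ≤ -(u t ^ 2)⁻¹ from neg_le_neg_iff.1 key
  refine image_le_of_deriv_right_lt_deriv_boundary' (f := fun t => -f t) (f' := fun t => -f' t)
    (fun t ht => (hd t ht).neg.continuousAt.continuousWithinAt)
    (fun t ht => (hd t (Ico_subset_Icc_self ht)).neg.hasDerivWithinAt) ?_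
    (fun t ht => (hB t (hu t ht.1)).continuousAt.continuousWithinAt)
    (fun t ht => (hB t (hu t ht.1)).hasDerivWithinAt) ?_ ht
  · simp [u, s, inv_pow, sq_sqrt ha.le]
  · intro t ht hft
    have hut := hu t ht.1
    have hft : f t = (u t ^ 2)⁻¹ := neg_injective hft
    calc -f' t ≤ C * f t ^ ((3:ℝ)/2) := hf' t ht
      _ = C * (u t ^ 3)⁻¹ := by rw [hft, inv_sq_rpow_three_halves hut.le]
      _ < 2 * C * (u t ^ 3)⁻¹ := by linarith [show 0 < C * (u t ^ 3)⁻¹ by positivity]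

theorem inv_sq_le_of_deriv_le_rpow (hC : 0 < C)
    (hd : ∀ t ∈ Icc a b, HasDerivAt f (f' t) t)
    (hf' : ∀ t ∈ Ioc a b, f' t ≤ C * f t ^ ((3:ℝ)/2))
    (hb : 0 < f b) {t : ℝ} (ht : t ∈ Icc a b) :
    (((√(f b))⁻¹ + C * (b - t)) ^ 2)⁻¹ ≤ f t := by
  have hmem : ∀ {s}, s ∈ Icc a b → a + b - s ∈ Icc a b := fun hs =>
    ⟨by linarith [hs.2], by linarith [hs.1]⟩
  have key := inv_sq_le_of_neg_deriv_le_rpow (f := fun s => f (a + b - s))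
    (f' := fun s => -f' (a + b - s)) (a := a) (b := b) hC
    (fun s hs => by simpa using (hd _ (hmem hs)).comp_const_sub (a + b) s)
    (fun s hs => by simpa using hf' (a + b - s) ⟨by linarith [hs.2], by linarith [hs.1]⟩)
    (by simpa using hb) (hmem ht)
  simp only [add_sub_cancel_left, sub_sub_cancel] at key
  convert key using 4; ring

end ThreeHalvesComparison

/-- `τ ↦ -log (a - C τ)` is unbounded at `-∞` with derivative `C (a - C τ)⁻¹ = O(g)`. -/
theorem not_integrableOn_Iio_of_inv_le {g : ℝ → ℝ} {a b C : ℝ} (hC : 0 < C)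
    (h : ∀ τ < b, (a - C * τ)⁻¹ ≤ g τ) : ¬ IntegrableOn g (Iio b) := by
  have hlin : Tendsto (fun τ => a - C * τ) atBot atTop :=
    tendsto_atTop_add_const_left _ a (tendsto_neg_atBot_atTop.atTop_mul_const hC |>.congr
      fun τ => by ring)
  have hpos : ∀ᶠ τ in atBot, 0 < a - C * τ := hlin.eventually_gt_atTop 0
  have hderiv : ∀ᶠ τ in atBot,
      HasDerivAt (fun τ => log (a - C * τ)) (-C / (a - C * τ)) τ := by
    filter_upwards [hpos] with τ hτ
    simpa using ((hasDerivAt_id' τ).const_mul C).const_sub a |>.log hτ.ne'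
  refine not_integrableOn_of_tendsto_norm_atTop_of_deriv_isBigO_filter atBot (Iio_mem_atBot b)
    (hderiv.mono fun τ hτ => hτ.differentiableAt)
    (tendsto_norm_atTop_atTop.comp (tendsto_log_atTop.comp hlin)) ?_
  refine Asymptotics.IsBigO.of_bound C ?_
  filter_upwards [hderiv, hpos, Iio_mem_atBot b] with τ hτ hτpos hτb
  rw [hτ.deriv, norm_div, norm_neg, Real.norm_of_nonneg hC.le, Real.norm_of_nonneg hτpos.le,
    div_eq_mul_inv]
  exact mul_le_mul_of_nonneg_left ((h τ hτb).trans (le_norm_self _)) hC.le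

theorem inv_sq_mul_rpow_neg_two_le {s C τ τ₀ : ℝ} (hs : 0 < s) (hC : 0 ≤ C) (hτ : τ ≤ τ₀)
    (hτ₀ : τ₀ ≤ 0) : ((s + C) ^ 2)⁻¹ * (1 + |τ|) ^ (-(2:ℝ)) ≤ ((s + C * (τ₀ - τ)) ^ 2)⁻¹ := by
  have habs : |τ| = -τ := abs_of_nonpos (hτ.trans hτ₀)
  rw [rpow_neg (by positivity), ← mul_inv, rpow_two, ← mul_pow]
  gcongr
  rw [habs]; nlinarith

theorem stmt15_general (ρ ρ' : ℝ → ℝ) (C τ₀ : ℝ) (hC : 0 < C)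
    (hd : ∀ τ ≤ (0:ℝ), HasDerivAt ρ (ρ' τ) τ)
    (hineq : ∀ τ ≤ (0:ℝ), |ρ' τ| ≤ C * (ρ τ) ^ ((3:ℝ)/2))
    (hτ₀ : τ₀ ≤ 0) (hposτ₀ : 0 < ρ τ₀) :
    (∀ τ ≤ (0:ℝ), 0 < ρ τ) ∧
    (∃ c > (0:ℝ), ∀ τ ≤ τ₀, c * (1 + |τ|) ^ (-(2:ℝ)) ≤ ρ τ) ∧
    ¬ IntegrableOn (fun τ => Real.sqrt (ρ τ)) (Set.Iio 0) := by
  set s := (√(ρ τ₀))⁻¹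
  have hs : 0 < s := inv_pos.2 (sqrt_pos.2 hposτ₀)
  have before : ∀ τ ≤ τ₀, ((s + C * (τ₀ - τ)) ^ 2)⁻¹ ≤ ρ τ := fun τ hτ =>
    inv_sq_le_of_deriv_le_rpow hC (fun t ht => hd t (ht.2.trans hτ₀))
      (fun t ht => (le_abs_self _).trans (hineq t (ht.2.trans hτ₀))) hposτ₀ ⟨le_rfl, hτ⟩
  have after : ∀ τ ∈ Icc τ₀ 0, ((s + C * (τ - τ₀)) ^ 2)⁻¹ ≤ ρ τ := fun τ hτ =>
    inv_sq_le_of_neg_deriv_le_rpow hC (fun t ht => hd t (ht.2.trans hτ.2))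
      (fun t ht => (neg_le_abs _).trans (hineq t (ht.2.le.trans hτ.2))) hposτ₀ ⟨hτ.1, le_rfl⟩
  refine ⟨fun τ hτ => ?_, ⟨((s + C) ^ 2)⁻¹, by positivity, fun τ hτ =>
    (inv_sq_mul_rpow_neg_two_le hs hC.le hτ hτ₀).trans (before τ hτ)⟩, fun hint => ?_⟩
  · rcases le_total τ τ₀ with hτ' | hτ'
    · have : 0 < s + C * (τ₀ - τ) := by nlinarith
      exact (by positivity : (0:ℝ) < _).trans_le (before τ hτ')
    · have : 0 < s + C * (τ - τ₀) := by nlinarith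
      exact (by positivity : (0:ℝ) < _).trans_le (after τ ⟨hτ', hτ⟩)
  · refine not_integrableOn_Iio_of_inv_le (a := s + C * τ₀) hC (fun τ hτ => ?_)
      (hint.mono_set (Iio_subset_Iio hτ₀))
    have hpos : 0 ≤ s + C * (τ₀ - τ) := by nlinarith
    calc (s + C * τ₀ - C * τ)⁻¹ = √(((s + C * (τ₀ - τ)) ^ 2)⁻¹) := by
          rw [sqrt_inv, sqrt_sq hpos]; ring_nf
      _ ≤ √(ρ τ) := sqrt_le_sqrt (before τ hτ.le)

/-- Lemma `lem:nonint-rho`-type statement: if `ρ ≥ 0` is absolutely continuous on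
`(-∞,0]`, `ρ → 0` at `-∞`, `|ρ'| ≤ C ρ^{3/2}`, and `ρ(τ₀) > 0`, then `ρ > 0` everywhere,
`ρ(τ) ≥ c (1+|τ|)⁻²` for `τ ≤ τ₀`, and `√ρ` is not integrable on `(-∞,0)`. -/
theorem stmt15 (ρ ρ' : ℝ → ℝ) (C τ₀ : ℝ) (hC : 0 < C)
    (hnn : ∀ τ ≤ (0:ℝ), 0 ≤ ρ τ)
    (hd : ∀ τ ≤ (0:ℝ), HasDerivAt ρ (ρ' τ) τ)
    (h0 : Tendsto ρ atBot (nhds 0))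
    (hineq : ∀ τ ≤ (0:ℝ), |ρ' τ| ≤ C * (ρ τ) ^ ((3:ℝ)/2))
    (hτ₀ : τ₀ ≤ 0) (hposτ₀ : 0 < ρ τ₀) :
    (∀ τ ≤ (0:ℝ), 0 < ρ τ) ∧
    (∃ c > (0:ℝ), ∀ τ ≤ τ₀, c * (1 + |τ|) ^ (-(2:ℝ)) ≤ ρ τ) ∧
    ¬ IntegrableOn (fun τ => Real.sqrt (ρ τ)) (Set.Iio 0) :=
  stmt15_general ρ ρ' C τ₀ hC hd hineq hτ₀ hposτ₀
end
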